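/- arXiv:2011.12003 — 9 statements merged into one kernel-verified Lean document; each statement's English description precedes it below -/
import Mathlib

section
/- Let (P, A, λ) be a marked poset and let x be a point of the marked order polytope O_{P,A}(λ). Then x is a vertex (extreme point) of O_{P,A}(λ) if and only if every connected component of the identity diagram of x contains an element of A. -/
/-!
If the component `C` of the identity diagram of `x` contains no marked element, shifting all
coordinates in `C` by `±δ`, with `δ` below every positive gap `x̂ q - x̂ p`, keeps `x̂` monotone:
equal values across the boundary of `C` cannot occur on comparable elements. So `x` is the
midpoint of two distinct points of the polytope.

Conversely, let `x = a • y + b • z` with `y, z` in the polytope. If `p ⋖ q` and `x̂ p = x̂ q`, then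
`ŷ q = x̂ q` and `ẑ q = x̂ q` give `ŷ p, ẑ p ≤ x̂ p`, hence equality since `x̂ p` is a proper convex
combination of them (dually for `q ⋖ p`). Agreement with `x̂` thus spreads along the identity
diagram from `A`, where it holds trivially.
-/

open Classical in
/-- The extension of `x : P∖A → ℝ` to all of `P`, taking the value `lam a` on marked
elements `a ∈ A`. -/
noncomputable def mopExtend {P : Type*} (A : Set P) (lam : A → ℝ)
    (x : {p : P // p ∉ A} → ℝ) : P → ℝ :=
  fun p => if h : p ∈ A then lam ⟨p, h⟩ else x ⟨p, h⟩

/-- The marked order polytope of the marked poset `(P, A, lam)`, realized in `ℝ^{P∖A}`. -/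
def markedOrderPolytope {P : Type*} [PartialOrder P] (A : Set P) (lam : A → ℝ) :
    Set ({p : P // p ∉ A} → ℝ) :=
  {x | ∀ p q : P, p ≤ q → mopExtend A lam x p ≤ mopExtend A lam x q}

/-- Two elements `p q : P` are directly linked in the identity diagram of `x` if one
covers the other in `P` and the extended coordinates agree. -/
def identityLinked {P : Type*} [PartialOrder P] (A : Set P) (lam : A → ℝ)
    (x : {p : P // p ∉ A} → ℝ) (p q : P) : Prop :=
  (p ⋖ q ∨ q ⋖ p) ∧ mopExtend A lam x p = mopExtend A lam x q

open Set Filter Topology Relation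

section IdentityDiagram

variable {P α : Type*} [PartialOrder P]

/-- `identityLinked A lam x` is `identityDiagram (mopExtend A lam x)` by definition. -/
def identityDiagram (f : P → α) (p q : P) : Prop :=
  (p ⋖ q ∨ q ⋖ p) ∧ f p = f q

lemma identityDiagram_symm {f : P → α} {p q : P} (h : identityDiagram f p q) :
    identityDiagram f q p :=
  ⟨h.1.symm, h.2.symm⟩

lemma Monotone.eqvGen_identityDiagram_of_le [LocallyFiniteOrder P] [PartialOrder α]
    {f : P → α} (hf : Monotone f) {p q : P} (hpq : p ≤ q) (h : f p = f q) :
    EqvGen (identityDiagram f) p q := by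
  induction le_iff_reflTransGen_covBy.mp hpq with
  | refl => exact .refl p
  | @tail r q hpr hrq ih =>
    have hfpr : f p ≤ f r := hf (le_iff_reflTransGen_covBy.mpr hpr)
    have hfrq : f r ≤ f q := hf hrq.le
    have hpr' : f p = f r := le_antisymm hfpr (h ▸ hfrq)
    exact .trans _ _ _ (ih (le_iff_reflTransGen_covBy.mpr hpr) hpr')
      (.rel _ _ ⟨.inl hrq, hpr'.symm.trans h⟩)

end IdentityDiagram

lemma Relation.EqvGen.mem_iff {α : Type*} {r : α → α → Prop} {S : Set α}
    (hS : ∀ p q, r p q → (p ∈ S ↔ q ∈ S)) {p q : α} (h : EqvGen r p q) : p ∈ S ↔ q ∈ S :=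
  (Equivalence.eqvGen_iff (r := fun p q => p ∈ S ↔ q ∈ S)
    ⟨fun _ => Iff.rfl, Iff.symm, Iff.trans⟩).mp (h.mono hS)

lemma exists_pos_le_sub_of_lt {ι : Type*} [Finite ι] (f : ι → ℝ) :
    ∃ δ > 0, ∀ i j, f i < f j → δ ≤ f j - f i := by
  have hsmall : ∀ᶠ δ in 𝓝[>] (0 : ℝ), 0 < δ ∧ ∀ i j, f i < f j → δ ≤ f j - f i := by
    refine eventually_mem_nhdsWithin.and (eventually_all.2 fun i => eventually_all.2 fun j => ?_)
    by_cases hij : f i < f j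
    · filter_upwards [nhdsWithin_le_nhds (Iic_mem_nhds (sub_pos.2 hij))] with δ hδ _ using hδ
    · exact .of_forall fun _ h => absurd h hij
  exact hsmall.exists

lemma Monotone.add_indicator_const {P : Type*} [Preorder P] {f : P → ℝ} (hf : Monotone f)
    {C : Set P} (hC : ∀ p q, p ≤ q → f p = f q → (p ∈ C ↔ q ∈ C)) {t : ℝ}
    (ht : ∀ p q, f p < f q → |t| ≤ f q - f p) :
    Monotone (f + C.indicator fun _ => t) := by
  intro p q hpq
  simp only [Pi.add_apply, indicator]
  rcases (hf hpq).eq_or_lt with heq | hlt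
  · have := hC p q hpq heq
    split_ifs <;> simp_all
  · have := ht p q hlt
    have := le_abs_self t
    have := neg_abs_le t
    split_ifs <;> linarith

lemma eq_of_le_of_add_eq {a b u v m : ℝ} (ha : 0 < a) (hb : 0 < b) (hab : a + b = 1)
    (hu : u ≤ m) (hv : v ≤ m) (h : a * u + b * v = m) : u = m ∧ v = m := by
  have hsum : a * (m - u) + b * (m - v) = 0 := by linear_combination m * hab - h
  have hau : 0 ≤ a * (m - u) := mul_nonneg ha.le (sub_nonneg.2 hu)
  have hbv : 0 ≤ b * (m - v) := mul_nonneg hb.le (sub_nonneg.2 hv)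
  constructor
  · nlinarith
  · nlinarith

lemma Monotone.eq_of_identityDiagram {P : Type*} [PartialOrder P] {f g h : P → ℝ}
    (hg : Monotone g) (hh : Monotone h) {a b : ℝ} (ha : 0 < a) (hb : 0 < b) (hab : a + b = 1)
    (hf : ∀ p, a * g p + b * h p = f p) {p q : P} (hpq : identityDiagram f p q)
    (hq : g q = f q ∧ h q = f q) : g p = f p ∧ h p = f p := by
  obtain ⟨hcov | hcov, hfpq⟩ := hpq
  · exact eq_of_le_of_add_eq ha hb hab (hfpq ▸ hq.1 ▸ hg hcov.le) (hfpq ▸ hq.2 ▸ hh hcov.le)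
      (hf p)
  · have hneg := eq_of_le_of_add_eq (u := -g p) (v := -h p) (m := -f p) ha hb hab
      (by linarith [hg hcov.le]) (by linarith [hh hcov.le]) (by linarith [hf p])
    exact ⟨neg_inj.1 hneg.1, neg_inj.1 hneg.2⟩

section MarkedOrderPolytope

variable {P : Type*} {A : Set P} {lam : A → ℝ}

@[simp]
lemma mopExtend_of_mem (x : {p : P // p ∉ A} → ℝ) {p : P} (hp : p ∈ A) :
    mopExtend A lam x p = lam ⟨p, hp⟩ :=
  dif_pos hp

@[simp]
lemma mopExtend_val (x : {p : P // p ∉ A} → ℝ) (p : {p : P // p ∉ A}) :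
    mopExtend A lam x p = x p :=
  dif_neg p.2

lemma mopExtend_add_comp_val (x : {p : P // p ∉ A} → ℝ) {g : P → ℝ} (hg : ∀ a ∈ A, g a = 0) :
    mopExtend A lam (x + g ∘ Subtype.val) = mopExtend A lam x + g := by
  funext p
  by_cases hp : p ∈ A <;> simp [mopExtend, hp, hg]

lemma mopExtend_smul_add_smul (y z : {p : P // p ∉ A} → ℝ) {a b : ℝ} (hab : a + b = 1) :
    mopExtend A lam (a • y + b • z) = a • mopExtend A lam y + b • mopExtend A lam z := by
  funext p
  by_cases hp : p ∈ A
  · simp [hp, ← add_mul, hab]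
  · simp [mopExtend, hp]

variable [PartialOrder P]

lemma mem_markedOrderPolytope_iff_monotone {x : {p : P // p ∉ A} → ℝ} :
    x ∈ markedOrderPolytope A lam ↔ Monotone (mopExtend A lam x) :=
  Iff.rfl

theorem exists_mem_eqvGen_identityLinked_of_mem_extremePoints [Finite P]
    {x : {p : P // p ∉ A} → ℝ} (hx : x ∈ (markedOrderPolytope A lam).extremePoints ℝ)
    (p₀ : P) : ∃ a ∈ A, EqvGen (identityLinked A lam x) p₀ a := by
  let _ : LocallyFiniteOrder P := .ofFiniteIcc fun _ _ => toFinite _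
  by_contra! hunmarked
  set f := mopExtend A lam x
  have hf : Monotone f := hx.1
  set C : Set P := {q | EqvGen (identityLinked A lam x) p₀ q}
  have hp₀C : p₀ ∈ C := EqvGen.refl p₀
  have hCA : ∀ a ∈ A, a ∉ C := hunmarked
  have hC : ∀ p q, p ≤ q → f p = f q → (p ∈ C ↔ q ∈ C) := fun p q hpq h =>
    have hlink := hf.eqvGen_identityDiagram_of_le hpq h
    ⟨fun hp => hp.trans _ _ _ hlink, fun hq => hq.trans _ _ _ hlink.symm⟩
  obtain ⟨δ, hδ, hgap⟩ := exists_pos_le_sub_of_lt f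
  have hperturb : ∀ t, |t| = δ →
      x + (C.indicator fun _ => t) ∘ Subtype.val ∈ markedOrderPolytope A lam := by
    intro t ht
    rw [mem_markedOrderPolytope_iff_monotone,
      mopExtend_add_comp_val x fun a ha => indicator_of_notMem (hCA a ha) _]
    exact hf.add_indicator_const hC fun p q h => ht ▸ hgap p q h
  have hsub : x - (C.indicator fun _ => δ) ∘ Subtype.val =
      x + (C.indicator fun _ => -δ) ∘ Subtype.val := by
    ext p
    by_cases hp : (p : P) ∈ C <;> simp [hp, sub_eq_add_neg]
  have hfixed := hx.2 (hperturb δ (abs_of_pos hδ)) (hsub ▸ hperturb (-δ) (by simp [hδ.le]))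
    (mem_openSegment_add_sub x _)
  have := congrFun (add_eq_left.1 hfixed) ⟨p₀, fun h => hCA p₀ h hp₀C⟩
  simp [indicator_of_mem hp₀C, hδ.ne'] at this

theorem mem_extremePoints_of_forall_exists_mem_eqvGen_identityLinked
    {x : {p : P // p ∉ A} → ℝ} (hx : x ∈ markedOrderPolytope A lam)
    (h : ∀ p, ∃ a ∈ A, EqvGen (identityLinked A lam x) p a) :
    x ∈ (markedOrderPolytope A lam).extremePoints ℝ := by
  refine mem_extremePoints_iff_left.2 ⟨hx, fun y hy z hz ⟨a, b, ha, hb, hab, hxyz⟩ => ?_⟩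
  have hcomb : ∀ p, a * mopExtend A lam y p + b * mopExtend A lam z p = mopExtend A lam x p :=
    fun p => by rw [← hxyz, mopExtend_smul_add_smul y z hab]; rfl
  set S : Set P := {p | mopExtend A lam y p = mopExtend A lam x p ∧
    mopExtend A lam z p = mopExtend A lam x p}
  have hS : ∀ p q, identityLinked A lam x p q → (p ∈ S ↔ q ∈ S) := fun p q hpq =>
    ⟨Monotone.eq_of_identityDiagram hy hz ha hb hab hcomb (identityDiagram_symm hpq),
      Monotone.eq_of_identityDiagram hy hz ha hb hab hcomb hpq⟩
  funext p
  obtain ⟨a', ha', hpa'⟩ := h p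
  have hpS : (p : P) ∈ S := (hpa'.mem_iff hS).2 ⟨by simp [ha'], by simp [ha']⟩
  simpa using hpS.1

end MarkedOrderPolytope

theorem statement0_general {P : Type*} [Fintype P] [PartialOrder P]
    (A : Set P) (lam : A → ℝ)
    (x : {p : P // p ∉ A} → ℝ) (hx : x ∈ markedOrderPolytope A lam) :
    x ∈ (markedOrderPolytope A lam).extremePoints ℝ ↔
      ∀ p : P, ∃ a ∈ A, Relation.EqvGen (identityLinked A lam x) p a :=
  ⟨exists_mem_eqvGen_identityLinked_of_mem_extremePoints,
    mem_extremePoints_of_forall_exists_mem_eqvGen_identityLinked hx⟩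

/-- A point of a marked order polytope is a vertex if and only if every connected
component of its identity diagram contains a marked element. -/
theorem statement0 {P : Type*} [Fintype P] [PartialOrder P]
    (A : Set P) (lam : A → ℝ)
    (hAmin : ∀ p : P, IsMin p → p ∈ A) (hAmax : ∀ p : P, IsMax p → p ∈ A)
    (hlam : ∀ a b : A, (a : P) ≤ (b : P) → lam a ≤ lam b)
    (x : {p : P // p ∉ A} → ℝ) (hx : x ∈ markedOrderPolytope A lam) :
    x ∈ (markedOrderPolytope A lam).extremePoints ℝ ↔
      ∀ p : P, ∃ a ∈ A, Relation.EqvGen (identityLinked A lam x) p a :=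
  statement0_general A lam x hx
end

section
/- Let (y_{i,j}) be a point of the type A_n Gelfand–Tsetlin polytope GT_{A_n}(λ). If every entry equals its upper-left or its upper-right neighbor — that is, y_{1,j} ∈ {λ_j, λ_{j+1}} for all 1 ≤ j ≤ n, and y_{i,j} ∈ {y_{i−1,j−1}, y_{i−1,j}} for all 2 ≤ i ≤ j ≤ n — then (y_{i,j}) is a vertex (extreme point) of GT_{A_n}(λ). -/
/-- Index set for type `Aₙ` Gelfand–Tsetlin patterns: pairs `(i, j)` with `1 ≤ i ≤ j ≤ n`. -/
abbrev GTAIdx (n : ℕ) := {p : ℕ × ℕ // 1 ≤ p.1 ∧ p.1 ≤ p.2 ∧ p.2 ≤ n}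

/-- The `(i, j)` coordinate of a point `y : ℝ^{n(n+1)/2}` (and `0` for out-of-range indices). -/
def gtaC (n : ℕ) (y : GTAIdx n → ℝ) (i j : ℕ) : ℝ :=
  if h : 1 ≤ i ∧ i ≤ j ∧ j ≤ n then y ⟨(i, j), h⟩ else 0

/-- The type `Aₙ` Gelfand–Tsetlin polytope of `λ` (with the convention `λ_{n+1} = 0`
encoded by the value `lam (n+1)`). -/
def GTA (n : ℕ) (lam : ℕ → ℝ) : Set (GTAIdx n → ℝ) :=
  {y | (∀ j, 1 ≤ j → j ≤ n → lam j ≥ gtaC n y 1 j ∧ gtaC n y 1 j ≥ lam (j + 1)) ∧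
       (∀ i j, 2 ≤ i → i ≤ j → j ≤ n →
          gtaC n y (i - 1) (j - 1) ≥ gtaC n y i j ∧ gtaC n y i j ≥ gtaC n y (i - 1) j)}

/-!
A Gelfand–Tsetlin pattern `y` lying in an open segment `(x₁, x₂)` of the polytope must coincide
with both endpoints, row by row. In the first row, `y₁ⱼ` sits at an end of the interval
`[λⱼ₊₁, λⱼ]`, which contains the corresponding entries of `x₁` and `x₂`, so all three agree.
In row `i`, `yᵢⱼ` equals an upper neighbour, which by induction is also the corresponding entry
of `x₁` and `x₂`, and the interlacing inequalities again put `yᵢⱼ` at an end of an interval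
containing the entries of `x₁` and `x₂`.
-/

section LinearOrder

variable {𝕜 E : Type*} [Semiring 𝕜] [PartialOrder 𝕜] [AddCommMonoid E] [LinearOrder E]
  [IsOrderedCancelAddMonoid E] [Module 𝕜 E] [PosSMulStrictMono 𝕜 E] {u v w : E}

lemma eq_of_mem_openSegment_of_le (hw : w ∈ openSegment 𝕜 u v) (hu : u ≤ w) (hv : v ≤ w) :
    u = w ∧ v = w := by
  rcases lt_trichotomy u v with huv | rfl | hvu
  · exact absurd hv (openSegment_subset_Ioo huv hw).2.not_ge
  · obtain ⟨a, b, -, -, hab, rfl⟩ := hw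
    simp only [Convex.combo_self hab, and_self]
  · rw [openSegment_symm] at hw
    exact absurd hu (openSegment_subset_Ioo hvu hw).2.not_ge

lemma eq_of_mem_openSegment_of_ge (hw : w ∈ openSegment 𝕜 u v) (hu : w ≤ u) (hv : w ≤ v) :
    u = w ∧ v = w := by
  rcases lt_trichotomy u v with huv | rfl | hvu
  · exact absurd hu (openSegment_subset_Ioo huv hw).1.not_ge
  · obtain ⟨a, b, -, -, hab, rfl⟩ := hw
    simp only [Convex.combo_self hab, and_self]
  · rw [openSegment_symm] at hw
    exact absurd hv (openSegment_subset_Ioo hvu hw).1.not_ge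

end LinearOrder

section GelfandTsetlin

variable {n : ℕ} {lam : ℕ → ℝ} {x₁ x₂ y : GTAIdx n → ℝ}

lemma gtaC_mem_openSegment (hy : y ∈ openSegment ℝ x₁ x₂) (i j : ℕ) :
    gtaC n y i j ∈ openSegment ℝ (gtaC n x₁ i j) (gtaC n x₂ i j) := by
  obtain ⟨a, b, ha, hb, hab, rfl⟩ := hy
  refine ⟨a, b, ha, hb, hab, ?_⟩
  unfold gtaC
  split_ifs <;> simp

lemma gtaC_ext (h : ∀ i j, 1 ≤ i → i ≤ j → j ≤ n → gtaC n x₁ i j = gtaC n y i j) : x₁ = y := by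
  funext ⟨⟨i, j⟩, hij⟩
  simpa only [gtaC, dif_pos hij] using h i j hij.1 hij.2.1 hij.2.2

lemma gtaC_eq_of_mem_openSegment (hx₁ : x₁ ∈ GTA n lam) (hx₂ : x₂ ∈ GTA n lam)
    (hy : y ∈ openSegment ℝ x₁ x₂)
    (h1 : ∀ j, 1 ≤ j → j ≤ n → gtaC n y 1 j = lam j ∨ gtaC n y 1 j = lam (j + 1))
    (h2 : ∀ i j, 2 ≤ i → i ≤ j → j ≤ n →
      gtaC n y i j = gtaC n y (i - 1) (j - 1) ∨ gtaC n y i j = gtaC n y (i - 1) j)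
    {i : ℕ} (hi : 1 ≤ i) :
    ∀ j, i ≤ j → j ≤ n → gtaC n x₁ i j = gtaC n y i j ∧ gtaC n x₂ i j = gtaC n y i j := by
  induction i, hi using Nat.le_induction with
  | base =>
    intro j hj hjn
    have hseg := gtaC_mem_openSegment hy 1 j
    rcases h1 j hj hjn with hyj | hyj <;> rw [hyj] at hseg ⊢
    · exact eq_of_mem_openSegment_of_le hseg (hx₁.1 j hj hjn).1 (hx₂.1 j hj hjn).1
    · exact eq_of_mem_openSegment_of_ge hseg (hx₁.1 j hj hjn).2 (hx₂.1 j hj hjn).2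
  | succ i hi ih =>
    intro j hij hjn
    have hseg := gtaC_mem_openSegment hy (i + 1) j
    have hx₁ij := hx₁.2 (i + 1) j (by omega) hij hjn
    have hx₂ij := hx₂.2 (i + 1) j (by omega) hij hjn
    rw [Nat.add_sub_cancel] at hx₁ij hx₂ij
    rcases h2 (i + 1) j (by omega) hij hjn with hyj | hyj <;>
      rw [Nat.add_sub_cancel] at hyj <;> rw [hyj] at hseg ⊢
    · obtain ⟨h₁, h₂⟩ := ih (j - 1) (by omega) (by omega)
      exact eq_of_mem_openSegment_of_le hseg (h₁ ▸ hx₁ij.1) (h₂ ▸ hx₂ij.1)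
    · obtain ⟨h₁, h₂⟩ := ih j (by omega) hjn
      exact eq_of_mem_openSegment_of_ge hseg (h₁ ▸ hx₁ij.2) (h₂ ▸ hx₂ij.2)

end GelfandTsetlin

theorem statement3_general (n : ℕ) (lam : ℕ → ℝ)
    (y : GTAIdx n → ℝ) (hy : y ∈ GTA n lam)
    (h1 : ∀ j, 1 ≤ j → j ≤ n → gtaC n y 1 j = lam j ∨ gtaC n y 1 j = lam (j + 1))
    (h2 : ∀ i j, 2 ≤ i → i ≤ j → j ≤ n →
      gtaC n y i j = gtaC n y (i - 1) (j - 1) ∨ gtaC n y i j = gtaC n y (i - 1) j) :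
    y ∈ (GTA n lam).extremePoints ℝ :=
  ⟨hy, fun _ hx₁ _ hx₂ hseg => gtaC_ext fun _ j hi hij hjn =>
    (gtaC_eq_of_mem_openSegment hx₁ hx₂ hseg h1 h2 hi j hij hjn).1⟩

/-- If every entry of a type `Aₙ` Gelfand–Tsetlin pattern equals its upper-left or its
upper-right neighbor, then the pattern is a vertex of the Gelfand–Tsetlin polytope. -/
theorem statement3 (n : ℕ) (hn : 1 ≤ n) (lam : ℕ → ℝ)
    (hmono : ∀ j, 1 ≤ j → j + 1 ≤ n → lam (j + 1) ≤ lam j)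
    (hpos : 0 ≤ lam n) (hzero : lam (n + 1) = 0)
    (y : GTAIdx n → ℝ) (hy : y ∈ GTA n lam)
    (h1 : ∀ j, 1 ≤ j → j ≤ n → gtaC n y 1 j = lam j ∨ gtaC n y 1 j = lam (j + 1))
    (h2 : ∀ i j, 2 ≤ i → i ≤ j → j ≤ n →
      gtaC n y i j = gtaC n y (i - 1) (j - 1) ∨ gtaC n y i j = gtaC n y (i - 1) j) :
    y ∈ (GTA n lam).extremePoints ℝ :=
  statement3_general n lam y hy h1 h2
end

section
/- Let n ≥ 1 and let λ_1 ≥ λ_2 ≥ … ≥ λ_n ≥ 0 be integers. Then the type A_n Gelfand–Tsetlin polytope GT_{A_n}(λ) is a lattice polytope: every vertex (extreme point) of GT_{A_n}(λ) has all coordinates in ℤ. -/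
theorem eq_zero_of_add_mem_of_sub_mem_extremePoints {𝕜 E : Type*} [Field 𝕜] [LinearOrder 𝕜]
    [IsStrictOrderedRing 𝕜] [AddCommGroup E] [Module 𝕜 E] {A : Set E} {x v : E}
    (hx : x ∈ A.extremePoints 𝕜) (hadd : x + v ∈ A) (hsub : x - v ∈ A) : v = 0 := by
  have hmid : x ∈ openSegment 𝕜 (x + v) (x - v) :=
    ⟨1 / 2, 1 / 2, by norm_num, by norm_num, by norm_num, by module⟩
  simpa using (mem_extremePoints_iff_left.1 hx).2 _ hadd _ hsub hmid

theorem monotone_add_mul_tent {c δ s : ℝ} (hs : |s| ≤ 1) :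
    Monotone fun x => x + s * max (δ - |x - c|) 0 := by
  intro a b hab
  set D := max (δ - |a - c|) 0 - max (δ - |b - c|) 0
  have hD : |D| ≤ b - a :=
    calc |D| ≤ |(δ - |a - c|) - (δ - |b - c|)| := abs_max_sub_max_le_abs _ _ _
      _ = |(|a - c|) - (|b - c|)| := by rw [sub_sub_sub_cancel_left, abs_sub_comm]
      _ ≤ |(a - c) - (b - c)| := abs_abs_sub_abs_le_abs_sub _ _
      _ = b - a := by
        rw [sub_sub_sub_cancel_right, abs_sub_comm, abs_of_nonneg (sub_nonneg.2 hab)]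
  have hsD : s * D ≤ b - a :=
    calc s * D ≤ |s| * |D| := (le_abs_self _).trans (abs_mul _ _).le
      _ ≤ 1 * (b - a) := mul_le_mul hs hD (abs_nonneg _) zero_le_one
      _ = b - a := one_mul _
  dsimp only
  linarith

theorem add_mul_tent_intCast (c s : ℝ) (k : ℤ) :
    (k : ℝ) + s * max (|c - round c| - |(k : ℝ) - c|) 0 = k := by
  rw [max_eq_right (sub_nonpos.2 (abs_sub_comm (k : ℝ) c ▸ round_le c k)), mul_zero, add_zero]

theorem gtaC_comp {n : ℕ} {g : ℝ → ℝ} (hg : g 0 = 0) (y : GTAIdx n → ℝ) (i j : ℕ) :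
    gtaC n (g ∘ y) i j = g (gtaC n y i j) := by
  unfold gtaC
  split_ifs <;> simp [hg]

theorem comp_mem_GTA {n : ℕ} {lam : ℕ → ℝ} {g : ℝ → ℝ} (hmono : Monotone g) (hg : g 0 = 0)
    (hfix : ∀ j, 1 ≤ j → j ≤ n + 1 → g (lam j) = lam j) {y : GTAIdx n → ℝ}
    (hy : y ∈ GTA n lam) : g ∘ y ∈ GTA n lam := by
  obtain ⟨hrow, hint⟩ := hy
  refine ⟨fun j hj hjn => ?_, fun i j hi hij hjn => ?_⟩
  · obtain ⟨hup, hlow⟩ := hrow j hj hjn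
    rw [gtaC_comp hg, ← hfix j hj (by omega), ← hfix (j + 1) (by omega) (by omega)]
    exact ⟨hmono hup, hmono hlow⟩
  · obtain ⟨hup, hlow⟩ := hint i j hi hij hjn
    simp only [gtaC_comp hg]
    exact ⟨hmono hup, hmono hlow⟩

theorem statement5_general (n : ℕ) (lam : ℕ → ℝ)
    (hzero : lam (n + 1) = 0)
    (hint : ∀ j, 1 ≤ j → j ≤ n → ∃ k : ℤ, lam j = k) :
    ∀ y ∈ (GTA n lam).extremePoints ℝ, ∀ p : GTAIdx n, ∃ k : ℤ, y p = k := by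
  intro y hy p
  by_contra! hp
  set c := y p
  set δ := |c - round c|
  have hδ : 0 < δ := abs_pos.2 (sub_ne_zero.2 (hp _))
  have hlam : ∀ j, 1 ≤ j → j ≤ n + 1 → ∃ k : ℤ, lam j = k := fun j hj hjn =>
    if h : j = n + 1 then ⟨0, by rw [h, hzero, Int.cast_zero]⟩ else hint j hj (by omega)
  have hpert : ∀ s : ℝ, |s| ≤ 1 → y + s • (fun q => max (δ - |y q - c|) 0) ∈ GTA n lam := by
    intro s hs
    refine comp_mem_GTA (g := fun x => x + s * max (δ - |x - c|) 0) (monotone_add_mul_tent hs)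
      (by exact_mod_cast add_mul_tent_intCast c s 0) (fun j hj hjn => ?_) hy.1
    obtain ⟨k, hk⟩ := hlam j hj hjn
    rw [hk]
    exact add_mul_tent_intCast c s k
  have hvanish := eq_zero_of_add_mem_of_sub_mem_extremePoints hy
    (by simpa using hpert 1 (by norm_num))
    (by simpa [sub_eq_add_neg] using hpert (-1) (by norm_num))
  have hδ0 : max (δ - |c - c|) 0 = 0 := congrFun hvanish p
  rw [sub_self, abs_zero, sub_zero, max_eq_left hδ.le] at hδ0
  exact hδ.ne' hδ0

/-- For an integral dominant weight, the type `Aₙ` Gelfand–Tsetlin polytope is a lattice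
polytope: every vertex has all coordinates in `ℤ`. -/
theorem statement5 (n : ℕ) (hn : 1 ≤ n) (lam : ℕ → ℝ)
    (hmono : ∀ j, 1 ≤ j → j + 1 ≤ n → lam (j + 1) ≤ lam j)
    (hpos : 0 ≤ lam n) (hzero : lam (n + 1) = 0)
    (hint : ∀ j, 1 ≤ j → j ≤ n → ∃ k : ℤ, lam j = k) :
    ∀ y ∈ (GTA n lam).extremePoints ℝ, ∀ p : GTAIdx n, ∃ k : ℤ, y p = k :=
  statement5_general n lam hzero hint
end

section
/- Let n ≥ 2 and let λ_1 ≥ … ≥ λ_n ≥ 0 be integers. Then the type B_n/C_n Gelfand–Tsetlin polytope GT_{BC_n}(λ) is a lattice polytope: every vertex (extreme point) of GT_{BC_n}(λ) has all coordinates in ℤ. -/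
/-- Index set for the `y`-entries: pairs `(i, j)` with `2 ≤ i ≤ j ≤ n`. -/
abbrev BCYIdx (n : ℕ) := {p : ℕ × ℕ // 2 ≤ p.1 ∧ p.1 ≤ p.2 ∧ p.2 ≤ n}

/-- Index set for the `z`-entries: pairs `(i, j)` with `1 ≤ i ≤ j ≤ n`. -/
abbrev BCZIdx (n : ℕ) := {p : ℕ × ℕ // 1 ≤ p.1 ∧ p.1 ≤ p.2 ∧ p.2 ≤ n}

/-- The `y_{i,j}` coordinate of a point, with the convention `y_{1,j} = λ_j`
(`0` for out-of-range indices). -/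
def bcY (n : ℕ) (lam : ℕ → ℝ) (w : (BCYIdx n → ℝ) × (BCZIdx n → ℝ)) (i j : ℕ) : ℝ :=
  if i = 1 ∧ 1 ≤ j ∧ j ≤ n then lam j
  else if h : 2 ≤ i ∧ i ≤ j ∧ j ≤ n then w.1 ⟨(i, j), h⟩ else 0

/-- The `z_{i,j}` coordinate of a point (`0` for out-of-range indices). -/
def bcZ (n : ℕ) (w : (BCYIdx n → ℝ) × (BCZIdx n → ℝ)) (i j : ℕ) : ℝ :=
  if h : 1 ≤ i ∧ i ≤ j ∧ j ≤ n then w.2 ⟨(i, j), h⟩ else 0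

/-- The type `Bₙ/Cₙ` Gelfand–Tsetlin polytope of `λ`. -/
def GTBC (n : ℕ) (lam : ℕ → ℝ) : Set ((BCYIdx n → ℝ) × (BCZIdx n → ℝ)) :=
  {w | (∀ i j, 1 ≤ i → i ≤ j → j ≤ n - 1 →
         bcY n lam w i j ≥ bcZ n w i j ∧ bcZ n w i j ≥ bcY n lam w i (j + 1)) ∧
       (∀ i, 1 ≤ i → i ≤ n → bcY n lam w i n ≥ bcZ n w i n ∧ bcZ n w i n ≥ 0) ∧
       (∀ i j, 1 ≤ i → i ≤ n - 1 → i + 1 ≤ j → j ≤ n →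
         bcZ n w i (j - 1) ≥ bcY n lam w (i + 1) j ∧ bcY n lam w (i + 1) j ≥ bcZ n w i j)}

lemma bcY_lam (n : ℕ) (lam : ℕ → ℝ) (w : (BCYIdx n → ℝ) × (BCZIdx n → ℝ)) {i j : ℕ}
    (h : i = 1 ∧ 1 ≤ j ∧ j ≤ n) : bcY n lam w i j = lam j := by
  rw [bcY, if_pos h]

lemma bcY_coord (n : ℕ) (lam : ℕ → ℝ) (w : (BCYIdx n → ℝ) × (BCZIdx n → ℝ)) {i j : ℕ}
    (h : 2 ≤ i ∧ i ≤ j ∧ j ≤ n) : bcY n lam w i j = w.1 ⟨(i, j), h⟩ := by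
  rw [bcY, if_neg (by omega), dif_pos h]

lemma bcY_zero (n : ℕ) (lam : ℕ → ℝ) (w : (BCYIdx n → ℝ) × (BCZIdx n → ℝ)) {i j : ℕ}
    (h1 : ¬(i = 1 ∧ 1 ≤ j ∧ j ≤ n)) (h2 : ¬(2 ≤ i ∧ i ≤ j ∧ j ≤ n)) :
    bcY n lam w i j = 0 := by
  rw [bcY, if_neg h1, dif_neg h2]

lemma bcZ_coord (n : ℕ) (w : (BCYIdx n → ℝ) × (BCZIdx n → ℝ)) {i j : ℕ}
    (h : 1 ≤ i ∧ i ≤ j ∧ j ≤ n) : bcZ n w i j = w.2 ⟨(i, j), h⟩ := by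
  rw [bcZ, dif_pos h]

lemma bcZ_zero (n : ℕ) (w : (BCYIdx n → ℝ) × (BCZIdx n → ℝ)) {i j : ℕ}
    (h : ¬(1 ≤ i ∧ i ≤ j ∧ j ≤ n)) : bcZ n w i j = 0 := by
  rw [bcZ, dif_neg h]

/-- For an integral dominant weight, the type `Bₙ/Cₙ` Gelfand–Tsetlin polytope is a
lattice polytope: every vertex has all coordinates in `ℤ`. -/
theorem statement6 (n : ℕ) (hn : 2 ≤ n) (lam : ℕ → ℝ)
    (hmono : ∀ j, 1 ≤ j → j + 1 ≤ n → lam (j + 1) ≤ lam j) (hpos : 0 ≤ lam n)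
    (hint : ∀ j, 1 ≤ j → j ≤ n → ∃ k : ℤ, lam j = k) :
    ∀ w ∈ (GTBC n lam).extremePoints ℝ,
      (∀ p : BCYIdx n, ∃ k : ℤ, w.1 p = k) ∧ (∀ p : BCZIdx n, ∃ k : ℤ, w.2 p = k) := by
  intro w hw
  by_contra hcon
  -- extract a non-integral coordinate value `c`
  obtain ⟨c, hcInt, hwit⟩ : ∃ c : ℝ, (∀ k : ℤ, c ≠ k) ∧
      ((∃ p : BCYIdx n, w.1 p = c) ∨ (∃ p : BCZIdx n, w.2 p = c)) := by
    rcases not_and_or.mp hcon with h | h <;> push_neg at h <;> obtain ⟨p, hp⟩ := h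
    · exact ⟨w.1 p, hp, Or.inl ⟨p, rfl⟩⟩
    · exact ⟨w.2 p, hp, Or.inr ⟨p, rfl⟩⟩
  have hc0 : c ≠ 0 := fun h => hcInt 0 (by simpa using h)
  have hclam : ∀ j, 1 ≤ j → j ≤ n → lam j ≠ c := by
    intro j h1 h2 h
    obtain ⟨k, hk⟩ := hint j h1 h2
    exact hcInt k (h ▸ hk)
  obtain ⟨hwS, hext⟩ := mem_extremePoints.mp hw
  obtain ⟨hw1, hw2, hw3⟩ := hwS
  -- the finite set of coordinate values
  set S : Finset ℝ :=
    ((Finset.range (n+2) ×ˢ Finset.range (n+2)).image (fun p => bcY n lam w p.1 p.2)) ∪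
    ((Finset.range (n+2) ×ˢ Finset.range (n+2)).image (fun p => bcZ n w p.1 p.2)) ∪ {0}
    with hSdef
  have h0S : (0 : ℝ) ∈ S := by
    rw [hSdef]; exact Finset.mem_union_right _ (Finset.mem_singleton_self 0)
  have hYS : ∀ i j, bcY n lam w i j ∈ S := by
    intro i j
    by_cases hij : i < n + 2 ∧ j < n + 2
    · rw [hSdef]
      refine Finset.mem_union_left _ (Finset.mem_union_left _ (Finset.mem_image.mpr
        ⟨(i, j), Finset.mem_product.mpr ⟨Finset.mem_range.mpr hij.1, Finset.mem_range.mpr hij.2⟩,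
          rfl⟩))
    · rw [bcY_zero n lam w (by omega) (by omega)]; exact h0S
  have hZS : ∀ i j, bcZ n w i j ∈ S := by
    intro i j
    by_cases hij : i < n + 2 ∧ j < n + 2
    · rw [hSdef]
      refine Finset.mem_union_left _ (Finset.mem_union_right _ (Finset.mem_image.mpr
        ⟨(i, j), Finset.mem_product.mpr ⟨Finset.mem_range.mpr hij.1, Finset.mem_range.mpr hij.2⟩,
          rfl⟩))
    · rw [bcZ_zero n w (by omega)]; exact h0S
  have hcS : c ∈ S := by
    rcases hwit with ⟨⟨⟨i, j⟩, hp⟩, hpc⟩ | ⟨⟨⟨i, j⟩, hp⟩, hpc⟩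
    · have : bcY n lam w i j = c := by rw [bcY_coord n lam w hp]; exact hpc
      exact this ▸ hYS i j
    · have : bcZ n w i j = c := by rw [bcZ_coord n w hp]; exact hpc
      exact this ▸ hZS i j
  -- the minimal gap
  set G : Finset ℝ := ((S ×ˢ S).filter (fun q => q.2 < q.1)).image (fun q => q.1 - q.2)
    with hGdef
  have hGne : G.Nonempty := by
    rcases lt_or_gt_of_ne hc0 with h | h
    · exact ⟨0 - c, Finset.mem_image.mpr ⟨(0, c), Finset.mem_filter.mpr
        ⟨Finset.mem_product.mpr ⟨h0S, hcS⟩, h⟩, rfl⟩⟩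
    · exact ⟨c - 0, Finset.mem_image.mpr ⟨(c, 0), Finset.mem_filter.mpr
        ⟨Finset.mem_product.mpr ⟨hcS, h0S⟩, h⟩, rfl⟩⟩
  set e : ℝ := G.min' hGne with hedef
  have hGpos : ∀ x ∈ G, 0 < x := by
    intro x hx
    rw [hGdef] at hx
    obtain ⟨q, hq, hqe⟩ := Finset.mem_image.mp hx
    have hlt : q.2 < q.1 := (Finset.mem_filter.mp hq).2
    rw [← hqe]
    exact sub_pos.mpr hlt
  have he : 0 < e := hGpos _ (G.min'_mem hGne)
  have hgap : ∀ a b : ℝ, a ∈ S → b ∈ S → b < a → b + e ≤ a := by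
    intro a b ha hb hba
    have : a - b ∈ G := Finset.mem_image.mpr ⟨(a, b), Finset.mem_filter.mpr
      ⟨Finset.mem_product.mpr ⟨ha, hb⟩, hba⟩, rfl⟩
    have := G.min'_le _ this
    rw [← hedef] at this
    linarith
  -- key perturbation inequality
  have key : ∀ s : ℝ, s = 1 ∨ s = -1 → ∀ a b : ℝ, a ∈ S → b ∈ S → b ≤ a →
      b + s * (if b = c then e else 0) ≤ a + s * (if a = c then e else 0) := by
    intro s hs a b ha hb hab
    by_cases hac : a = c <;> by_cases hbc : b = c
    · rw [if_pos hac, if_pos hbc]; linarith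
    · rw [if_pos hac, if_neg hbc]
      have hba : b < a := lt_of_le_of_ne hab (fun h => hbc (h ▸ hac))
      have := hgap a b ha hb hba
      rcases hs with rfl | rfl <;> linarith
    · rw [if_neg hac, if_pos hbc]
      have hba : b < a := lt_of_le_of_ne hab (fun h => hac (h.symm ▸ hbc))
      have := hgap a b ha hb hba
      rcases hs with rfl | rfl <;> linarith
    · rw [if_neg hac, if_neg hbc]; linarith
  -- perturbed point and its coordinates
  have hmem : ∀ s : ℝ, s = 1 ∨ s = -1 →
      ((fun p => w.1 p + s * (if w.1 p = c then e else 0),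
        fun p => w.2 p + s * (if w.2 p = c then e else 0)) :
        (BCYIdx n → ℝ) × (BCZIdx n → ℝ)) ∈ GTBC n lam := by
    intro s hs
    set wp : (BCYIdx n → ℝ) × (BCZIdx n → ℝ) :=
      (fun p => w.1 p + s * (if w.1 p = c then e else 0),
       fun p => w.2 p + s * (if w.2 p = c then e else 0)) with hwpdef
    have hYp : ∀ i j, bcY n lam wp i j
        = bcY n lam w i j + s * (if bcY n lam w i j = c then e else 0) := by
      intro i j
      by_cases h1 : i = 1 ∧ 1 ≤ j ∧ j ≤ n
      · rw [bcY_lam n lam wp h1, bcY_lam n lam w h1, if_neg (hclam j h1.2.1 h1.2.2)]; ring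
      · by_cases h2 : 2 ≤ i ∧ i ≤ j ∧ j ≤ n
        · rw [bcY_coord n lam wp h2, bcY_coord n lam w h2, hwpdef]
        · rw [bcY_zero n lam wp h1 h2, bcY_zero n lam w h1 h2,
            if_neg (fun h => hc0 h.symm)]; ring
    have hZp : ∀ i j, bcZ n wp i j
        = bcZ n w i j + s * (if bcZ n w i j = c then e else 0) := by
      intro i j
      by_cases h : 1 ≤ i ∧ i ≤ j ∧ j ≤ n
      · rw [bcZ_coord n wp h, bcZ_coord n w h, hwpdef]
      · rw [bcZ_zero n wp h, bcZ_zero n w h, if_neg (fun h => hc0 h.symm)]; ring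
    refine ⟨fun i j hi hij hjn => ?_, fun i hi hin => ?_, fun i j hi hin hij hjn => ?_⟩
    · obtain ⟨ha, hb⟩ := hw1 i j hi hij hjn
      exact ⟨by rw [hYp, hZp]; exact key s hs _ _ (hYS i j) (hZS i j) ha,
             by rw [hZp, hYp]; exact key s hs _ _ (hZS i j) (hYS i (j+1)) hb⟩
    · obtain ⟨ha, hb⟩ := hw2 i hi hin
      refine ⟨by rw [hYp, hZp]; exact key s hs _ _ (hYS i n) (hZS i n) ha, ?_⟩
      have := key s hs (bcZ n w i n) 0 (hZS i n) h0S hb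
      rw [if_neg (fun h => hc0 h.symm)] at this
      rw [hZp]
      linarith
    · obtain ⟨ha, hb⟩ := hw3 i j hi hin hij hjn
      exact ⟨by rw [hZp, hYp]; exact key s hs _ _ (hZS i (j-1)) (hYS (i+1) j) ha,
             by rw [hYp, hZp]; exact key s hs _ _ (hYS (i+1) j) (hZS i j) hb⟩
  -- derive the contradiction from extremality
  set x1 : (BCYIdx n → ℝ) × (BCZIdx n → ℝ) :=
    (fun p => w.1 p + 1 * (if w.1 p = c then e else 0),
     fun p => w.2 p + 1 * (if w.2 p = c then e else 0)) with hx1def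
  set x2 : (BCYIdx n → ℝ) × (BCZIdx n → ℝ) :=
    (fun p => w.1 p + (-1) * (if w.1 p = c then e else 0),
     fun p => w.2 p + (-1) * (if w.2 p = c then e else 0)) with hx2def
  have hx1 : x1 ∈ GTBC n lam := hmem 1 (Or.inl rfl)
  have hx2 : x2 ∈ GTBC n lam := hmem (-1) (Or.inr rfl)
  have hseg : w ∈ openSegment ℝ x1 x2 := by
    refine ⟨1/2, 1/2, by norm_num, by norm_num, by norm_num, ?_⟩
    rw [hx1def, hx2def]
    refine Prod.ext ?_ ?_ <;> funext p <;>
      simp only [Prod.smul_fst, Prod.smul_snd, Prod.fst_add, Prod.snd_add, Pi.add_apply,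
        Pi.smul_apply, smul_eq_mul] <;> ring
  have hx1w : x1 = w := (hext x1 hx1 x2 hx2 hseg).1
  rcases hwit with ⟨p, hpc⟩ | ⟨p, hpc⟩
  · have := congrFun (congrArg Prod.fst hx1w) p
    rw [hx1def] at this
    simp only [if_pos hpc, one_mul] at this
    linarith
  · have := congrFun (congrArg Prod.snd hx1w) p
    rw [hx1def] at this
    simp only [if_pos hpc, one_mul] at this
    linarith
end

section
/- Let n ≥ 2 and let λ_1 ≥ … ≥ λ_n ≥ 0 be real numbers; set λ_k := 0 for every index k > n. Then the point of ℝ^{n(n−1)/2} × ℝ^{n(n+1)/2} given by y_{i,j} = λ_{i+j−1} for 2 ≤ i ≤ j ≤ n and z_{i,j} = λ_{i+j} for 1 ≤ i ≤ j ≤ n belongs to the type B_n/C_n Gelfand–Tsetlin polytope GT_{BC_n}(λ) and is a vertex (extreme point) of GT_{BC_n}(λ). -/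
theorem AffineMap.eq_of_mem_openSegment {𝕜 E : Type*} [Field 𝕜] [LinearOrder 𝕜]
    [IsStrictOrderedRing 𝕜] [AddCommGroup E] [Module 𝕜 E] {f g : E →ᵃ[𝕜] 𝕜} {x x₁ x₂ : E}
    (h₁ : g x₁ ≤ f x₁) (h₂ : g x₂ ≤ f x₂) (hx : x ∈ openSegment 𝕜 x₁ x₂) (h : f x = g x) :
    f x₁ = g x₁ := by
  rw [openSegment_eq_image_lineMap] at hx
  obtain ⟨t, ⟨ht₀, ht₁⟩, rfl⟩ := hx
  rw [apply_lineMap, apply_lineMap, lineMap_apply_module, lineMap_apply_module,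
    smul_eq_mul, smul_eq_mul, smul_eq_mul, smul_eq_mul] at h
  have hleft : (1 - t) * (f x₁ - g x₁) = 0 := by
    nlinarith [mul_nonneg (sub_nonneg.2 ht₁.le) (sub_nonneg.2 h₁),
      mul_nonneg ht₀.le (sub_nonneg.2 h₂)]
  have := (mul_eq_zero.1 hleft).resolve_left (sub_ne_zero.2 ht₁.ne')
  linarith

abbrev BCPoint (n : ℕ) := (BCYIdx n → ℝ) × (BCZIdx n → ℝ)

section Coordinates

variable {n : ℕ} {lam : ℕ → ℝ} {i j : ℕ} {w : BCPoint n}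

theorem bcY_one (hj₁ : 1 ≤ j) (hjn : j ≤ n) : bcY n lam w 1 j = lam j := by
  simp [bcY, hj₁, hjn]

theorem bcY_of_two_le (h : 2 ≤ i ∧ i ≤ j ∧ j ≤ n) : bcY n lam w i j = w.1 ⟨(i, j), h⟩ := by
  rw [bcY, if_neg (by omega), dif_pos h]

theorem bcZ_of_le (h : 1 ≤ i ∧ i ≤ j ∧ j ≤ n) : bcZ n w i j = w.2 ⟨(i, j), h⟩ :=
  dif_pos h

theorem BCPoint.ext_bcY_bcZ {v : BCPoint n}
    (hy : ∀ i j, 2 ≤ i → i ≤ j → j ≤ n → bcY n lam v i j = bcY n lam w i j)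
    (hz : ∀ i j, 1 ≤ i → i ≤ j → j ≤ n → bcZ n v i j = bcZ n w i j) : v = w := by
  refine Prod.ext (funext fun ⟨(i, j), h⟩ => ?_) (funext fun ⟨(i, j), h⟩ => ?_)
  · simpa only [bcY_of_two_le h] using hy i j h.1 h.2.1 h.2.2
  · simpa only [bcZ_of_le h] using hz i j h.1 h.2.1 h.2.2

variable (n lam i j)

def bcYLinear : BCPoint n →ₗ[ℝ] ℝ :=
  if h : 2 ≤ i ∧ i ≤ j ∧ j ≤ n then LinearMap.proj ⟨(i, j), h⟩ ∘ₗ LinearMap.fst ℝ _ _ else 0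

def bcZLinear : BCPoint n →ₗ[ℝ] ℝ :=
  if h : 1 ≤ i ∧ i ≤ j ∧ j ≤ n then LinearMap.proj ⟨(i, j), h⟩ ∘ₗ LinearMap.snd ℝ _ _ else 0

def bcYAffine : BCPoint n →ᵃ[ℝ] ℝ :=
  (bcYLinear n i j).toAffineMap + AffineMap.const ℝ _ (bcY n lam 0 i j)

@[simp]
theorem bcZLinear_apply : bcZLinear n i j w = bcZ n w i j := by
  unfold bcZLinear bcZ
  split_ifs <;> rfl

@[simp]
theorem bcYAffine_apply : bcYAffine n lam i j w = bcY n lam w i j := by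
  unfold bcYAffine bcYLinear bcY
  split_ifs with hy h₁
  · omega
  all_goals simp

end Coordinates

def bcVertex (n : ℕ) (lam : ℕ → ℝ) : BCPoint n :=
  (fun p => lam (p.1.1 + p.1.2 - 1), fun p => lam (p.1.1 + p.1.2))

section Vertex

variable {n i j : ℕ} {lam : ℕ → ℝ}

theorem bcY_bcVertex (hi : 1 ≤ i) (hij : i ≤ j) (hjn : j ≤ n) :
    bcY n lam (bcVertex n lam) i j = lam (i + j - 1) := by
  obtain rfl | hi₂ := eq_or_lt_of_le hi
  · rw [bcY_one (by omega) hjn, Nat.add_sub_cancel_left]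
  · exact bcY_of_two_le ⟨hi₂, hij, hjn⟩

theorem bcZ_bcVertex (hi : 1 ≤ i) (hij : i ≤ j) (hjn : j ≤ n) :
    bcZ n (bcVertex n lam) i j = lam (i + j) :=
  bcZ_of_le ⟨hi, hij, hjn⟩

theorem succ_le_of_antitone_of_vanishing
    (hmono : ∀ j, 1 ≤ j → j + 1 ≤ n → lam (j + 1) ≤ lam j) (hpos : 0 ≤ lam n)
    (hzero : ∀ k, n < k → lam k = 0) (k : ℕ) (hk : 1 ≤ k) : lam (k + 1) ≤ lam k := by
  rcases lt_trichotomy k n with h | rfl | h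
  · exact hmono k hk h
  · rwa [hzero (k + 1) k.lt_succ_self]
  · rw [hzero k h, hzero (k + 1) (by omega)]

theorem bcVertex_mem_GTBC (hstep : ∀ k, 1 ≤ k → lam (k + 1) ≤ lam k)
    (hzero : ∀ k, n < k → lam k = 0) : bcVertex n lam ∈ GTBC n lam := by
  refine ⟨fun i j hi hij hjn => ?_, fun i hi hin => ?_, fun i j hi hin hij hjn => ?_⟩
  · rw [bcZ_bcVertex hi hij (by omega), bcY_bcVertex hi hij (by omega),
      bcY_bcVertex hi (by omega) (by omega), show i + (j + 1) - 1 = i + j by omega]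
    refine ⟨?_, le_rfl⟩
    simpa [show i + j - 1 + 1 = i + j by omega] using hstep (i + j - 1) (by omega)
  · rw [bcZ_bcVertex hi hin le_rfl, bcY_bcVertex hi hin le_rfl, hzero (i + n) (by omega)]
    refine ⟨?_, le_rfl⟩
    simpa [show i + n - 1 + 1 = i + n by omega, hzero (i + n) (by omega)]
      using hstep (i + n - 1) (by omega)
  · rw [bcZ_bcVertex hi (by omega) (by omega), bcZ_bcVertex hi (by omega) hjn,
      bcY_bcVertex (by omega) hij hjn, show i + 1 + j - 1 = i + j by omega]
    refine ⟨?_, le_rfl⟩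
    simpa [show i + (j - 1) + 1 = i + j by omega] using hstep (i + (j - 1)) (by omega)

end Vertex

structure IsBCTight (n : ℕ) (lam : ℕ → ℝ) (w : BCPoint n) : Prop where
  bcZ_last : ∀ i, 1 ≤ i → i ≤ n → bcZ n w i n = 0
  bcZ_eq_bcY : ∀ i j, 1 ≤ i → i ≤ j → j ≤ n - 1 → bcZ n w i j = bcY n lam w i (j + 1)
  bcY_eq_bcZ : ∀ i j, 1 ≤ i → i ≤ n - 1 → i + 1 ≤ j → j ≤ n →
    bcY n lam w (i + 1) j = bcZ n w i j

namespace IsBCTight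

variable {n : ℕ} {lam : ℕ → ℝ} {w : BCPoint n}

theorem of_bcVertex (hzero : ∀ k, n < k → lam k = 0) : IsBCTight n lam (bcVertex n lam) where
  bcZ_last i hi hin := by rw [bcZ_bcVertex hi hin le_rfl, hzero _ (by omega)]
  bcZ_eq_bcY i j hi hij hjn := by
    rw [bcZ_bcVertex hi hij (by omega), bcY_bcVertex hi (by omega) (by omega),
      Nat.add_succ_sub_one]
  bcY_eq_bcZ i j hi hin hij hjn := by
    rw [bcZ_bcVertex hi (by omega) hjn, bcY_bcVertex (by omega) hij hjn]
    congr 1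
    omega

theorem left_of_mem_openSegment {x₁ x₂ : BCPoint n} (hx₁ : x₁ ∈ GTBC n lam)
    (hx₂ : x₂ ∈ GTBC n lam) (hw : w ∈ openSegment ℝ x₁ x₂) (htight : IsBCTight n lam w) :
    IsBCTight n lam x₁ where
  bcZ_last i hi hin := by
    simpa using AffineMap.eq_of_mem_openSegment
      (f := (bcZLinear n i n).toAffineMap) (g := 0)
      (by simpa using (hx₁.2.1 i hi hin).2)
      (by simpa using (hx₂.2.1 i hi hin).2) hw
      (by simpa using htight.bcZ_last i hi hin)
  bcZ_eq_bcY i j hi hij hjn := by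
    simpa using AffineMap.eq_of_mem_openSegment
      (f := (bcZLinear n i j).toAffineMap) (g := bcYAffine n lam i (j + 1))
      (by simpa using (hx₁.1 i j hi hij hjn).2)
      (by simpa using (hx₂.1 i j hi hij hjn).2) hw
      (by simpa using htight.bcZ_eq_bcY i j hi hij hjn)
  bcY_eq_bcZ i j hi hin hij hjn := by
    simpa using AffineMap.eq_of_mem_openSegment
      (f := bcYAffine n lam (i + 1) j) (g := (bcZLinear n i j).toAffineMap)
      (by simpa using (hx₁.2.2 i j hi hin hij hjn).2)
      (by simpa using (hx₂.2.2 i j hi hin hij hjn).2) hw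
      (by simpa using htight.bcY_eq_bcZ i j hi hin hij hjn)

theorem bcZ_eq (hzero : ∀ k, n < k → lam k = 0) (htight : IsBCTight n lam w) {i : ℕ}
    (hi : 1 ≤ i) : ∀ j, i ≤ j → j ≤ n → bcZ n w i j = lam (i + j) := by
  induction i, hi using Nat.le_induction with
  | base =>
    intro j hij hjn
    obtain rfl | hjn := eq_or_lt_of_le hjn
    · rw [htight.bcZ_last 1 le_rfl (by omega), hzero _ (by omega)]
    · rw [htight.bcZ_eq_bcY 1 j le_rfl hij (by omega), bcY_one (by omega) hjn, add_comm]
  | succ i hi ih =>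
    intro j hij hjn
    obtain rfl | hjn := eq_or_lt_of_le hjn
    · rw [htight.bcZ_last (i + 1) (by omega) (by omega), hzero _ (by omega)]
    · rw [htight.bcZ_eq_bcY (i + 1) j (by omega) hij (by omega),
        htight.bcY_eq_bcZ i (j + 1) hi (by omega) (by omega) (by omega),
        ih (j + 1) (by omega) (by omega)]
      congr 1
      omega

theorem eq_bcVertex (hzero : ∀ k, n < k → lam k = 0) (htight : IsBCTight n lam w) :
    w = bcVertex n lam := by
  refine BCPoint.ext_bcY_bcZ (lam := lam) (fun i j hi hij hjn => ?_) (fun i j hi hij hjn => ?_)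
  · obtain ⟨i, rfl⟩ : ∃ i', i = i' + 1 := ⟨i - 1, by omega⟩
    rw [htight.bcY_eq_bcZ i j (by omega) (by omega) hij hjn,
      htight.bcZ_eq hzero (by omega) j (by omega) hjn, bcY_bcVertex (by omega) hij hjn]
    congr 1
    omega
  · rw [htight.bcZ_eq hzero hi j hij hjn, bcZ_bcVertex hi hij hjn]

end IsBCTight

theorem statement7_general (n : ℕ) (lam : ℕ → ℝ)
    (hmono : ∀ j, 1 ≤ j → j + 1 ≤ n → lam (j + 1) ≤ lam j) (hpos : 0 ≤ lam n)
    (hzero : ∀ k, n < k → lam k = 0)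
    (w : (BCYIdx n → ℝ) × (BCZIdx n → ℝ))
    (hw : w = (fun p => lam (p.1.1 + p.1.2 - 1), fun p => lam (p.1.1 + p.1.2))) :
    w ∈ GTBC n lam ∧ w ∈ (GTBC n lam).extremePoints ℝ := by
  obtain rfl : w = bcVertex n lam := hw
  have hmem := bcVertex_mem_GTBC (succ_le_of_antitone_of_vanishing hmono hpos hzero) hzero
  refine ⟨hmem, hmem, fun x₁ hx₁ x₂ hx₂ hseg => ?_⟩
  exact ((IsBCTight.of_bcVertex hzero).left_of_mem_openSegment hx₁ hx₂ hseg).eq_bcVertex hzero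

/-- The explicit pattern `y_{i,j} = λ_{i+j−1}`, `z_{i,j} = λ_{i+j}` (with `λ_k := 0` for
`k > n`) is a vertex of the type `Bₙ/Cₙ` Gelfand–Tsetlin polytope. -/
theorem statement7 (n : ℕ) (hn : 2 ≤ n) (lam : ℕ → ℝ)
    (hmono : ∀ j, 1 ≤ j → j + 1 ≤ n → lam (j + 1) ≤ lam j) (hpos : 0 ≤ lam n)
    (hzero : ∀ k, n < k → lam k = 0)
    (w : (BCYIdx n → ℝ) × (BCZIdx n → ℝ))
    (hw : w = (fun p => lam (p.1.1 + p.1.2 - 1), fun p => lam (p.1.1 + p.1.2))) :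
    w ∈ GTBC n lam ∧ w ∈ (GTBC n lam).extremePoints ℝ :=
  statement7_general n lam hmono hpos hzero w hw
end

section
/- Let n ≥ 3 and λ ∈ ℝ^n. Then the map ρ_λ takes values in the affine subspace V_λ, the composite ψ_λ ∘ ρ_λ is the identity of ℝ^{n(n−1)}, and the composite ρ_λ ∘ ψ_λ is the identity of V_λ; in particular ψ_λ : V_λ → ℝ^{n(n−1)} is a bijection with inverse ρ_λ. -/
/-- Index set for the `y`-entries: pairs `(i, j)` with `2 ≤ i ≤ j ≤ n`. -/
abbrev DYIdx (n : ℕ) := {p : ℕ × ℕ // 2 ≤ p.1 ∧ p.1 ≤ p.2 ∧ p.2 ≤ n}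

/-- Index set for the `z`-entries with `1 ≤ i ≤ j ≤ n − 2`. -/
abbrev DZIdx (n : ℕ) := {p : ℕ × ℕ // 1 ≤ p.1 ∧ p.1 ≤ p.2 ∧ p.2 ≤ n - 2}

/-- Index set for the `z↑`- and `z↓`-entries: `1 ≤ i ≤ n − 2`. -/
abbrev DUIdx (n : ℕ) := {i : ℕ // 1 ≤ i ∧ i ≤ n - 2}

/-- The ambient space `ℝ^{n²−2}` of tweaked Gelfand–Tsetlin patterns: coordinates
`y_{i,j}` (for `2 ≤ i ≤ j ≤ n`), `z_{i,j}` (for `1 ≤ i ≤ j ≤ n−2`), `z↑_{i,n−1}` and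
`z↓_{i,n−1}` (for `1 ≤ i ≤ n−2`), and `z_{n−1,n−1}`. -/
abbrev TPt (n : ℕ) := (DYIdx n → ℝ) × (DZIdx n → ℝ) × (DUIdx n → ℝ) × (DUIdx n → ℝ) × ℝ

/-- The `y_{i,j}` coordinate, with the convention `y_{1,j} = λ_j`
(`0` for out-of-range indices). -/
def tY (n : ℕ) (lam : ℕ → ℝ) (w : TPt n) (i j : ℕ) : ℝ :=
  if i = 1 ∧ 1 ≤ j ∧ j ≤ n then lam j
  else if h : 2 ≤ i ∧ i ≤ j ∧ j ≤ n then w.1 ⟨(i, j), h⟩ else 0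

/-- The `z_{i,j}` coordinate, `1 ≤ i ≤ j ≤ n−2` (`0` for out-of-range indices). -/
def tZ (n : ℕ) (w : TPt n) (i j : ℕ) : ℝ :=
  if h : 1 ≤ i ∧ i ≤ j ∧ j ≤ n - 2 then w.2.1 ⟨(i, j), h⟩ else 0

/-- The `z↑_{i,n−1}` coordinate (`0` for out-of-range indices). -/
def tU (n : ℕ) (w : TPt n) (i : ℕ) : ℝ :=
  if h : 1 ≤ i ∧ i ≤ n - 2 then w.2.2.1 ⟨i, h⟩ else 0

/-- The `z↓_{i,n−1}` coordinate (`0` for out-of-range indices). -/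
def tD (n : ℕ) (w : TPt n) (i : ℕ) : ℝ :=
  if h : 1 ≤ i ∧ i ≤ n - 2 then w.2.2.2.1 ⟨i, h⟩ else 0

/-- The `z_{n−1,n−1}` coordinate. -/
def tL (n : ℕ) (w : TPt n) : ℝ := w.2.2.2.2

/-- The affine subspace `V_λ ⊆ ℝ^{n²−2}` defined by
`z↑_{i,n−1} − z↓_{i,n−1} = y_{i,n−1} − y_{i+1,n−1}` for `1 ≤ i ≤ n−2`. -/
def Vlam (n : ℕ) (lam : ℕ → ℝ) : Set (TPt n) :=
  {w | ∀ i, 1 ≤ i → i ≤ n - 2 →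
    tU n w i - tD n w i = tY n lam w i (n - 1) - tY n lam w (i + 1) (n - 1)}

/-- The tweaked Gelfand–Tsetlin polytope `tGT(λ)` in type `Dₙ`. -/
def tGT (n : ℕ) (lam : ℕ → ℝ) : Set (TPt n) :=
  {w | w ∈ Vlam n lam ∧
    (∀ i j, 1 ≤ i → i ≤ n - 2 → i ≤ j → j ≤ n - 2 →
      tY n lam w i j ≥ tZ n w i j ∧ tZ n w i j ≥ tY n lam w i (j + 1)) ∧
    (∀ i j, 1 ≤ i → i ≤ n - 2 → i + 1 ≤ j → j ≤ n - 2 →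
      tZ n w i (j - 1) ≥ tY n lam w (i + 1) j ∧ tY n lam w (i + 1) j ≥ tZ n w i j) ∧
    (∀ i, 1 ≤ i → i ≤ n - 2 → tZ n w i (n - 2) ≥ tY n lam w (i + 1) (n - 1)) ∧
    (∀ i, 1 ≤ i → i ≤ n - 2 →
      tY n lam w i (n - 1) ≥ tU n w i ∧
      tU n w i ≥ max (tY n lam w i n) (tY n lam w (i + 1) n) ∧
      tU n w i ≤ tY n lam w i (n - 1) + tY n lam w i n + tY n lam w (i + 1) n ∧
      tY n lam w (i + 1) (n - 1) ≥ tD n w i ∧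
      tD n w i ≥ max (tY n lam w i n) (tY n lam w (i + 1) n) ∧
      tD n w i ≤ tY n lam w (i + 1) (n - 1) + tY n lam w i n + tY n lam w (i + 1) n) ∧
    (tY n lam w (n - 1) (n - 1) ≥ tL n w ∧
      tL n w ≥ max (tY n lam w (n - 1) n) (tY n lam w n n) ∧
      tL n w ≤ tY n lam w (n - 1) (n - 1) + tY n lam w (n - 1) n + tY n lam w n n)}

/-- Index set for the `z`-entries of ordinary type `Dₙ` patterns:
`1 ≤ i ≤ j ≤ n − 1`. -/
abbrev GZIdx (n : ℕ) := {p : ℕ × ℕ // 1 ≤ p.1 ∧ p.1 ≤ p.2 ∧ p.2 ≤ n - 1}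

/-- The ambient space `ℝ^{n(n−1)}` of ordinary type `Dₙ` Gelfand–Tsetlin patterns:
coordinates `y_{i,j}` for `2 ≤ i ≤ j ≤ n` and `z_{i,j}` for `1 ≤ i ≤ j ≤ n−1`. -/
abbrev GPt (n : ℕ) := (DYIdx n → ℝ) × (GZIdx n → ℝ)

/-- The `y_{i,j}` coordinate of an ordinary pattern, with `y_{1,j} = λ_j`. -/
def gY (n : ℕ) (lam : ℕ → ℝ) (v : GPt n) (i j : ℕ) : ℝ :=
  if i = 1 ∧ 1 ≤ j ∧ j ≤ n then lam j
  else if h : 2 ≤ i ∧ i ≤ j ∧ j ≤ n then v.1 ⟨(i, j), h⟩ else 0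

/-- The `z_{i,j}` coordinate of an ordinary pattern (`0` for out-of-range indices). -/
def gZ (n : ℕ) (v : GPt n) (i j : ℕ) : ℝ :=
  if h : 1 ≤ i ∧ i ≤ j ∧ j ≤ n - 1 then v.2 ⟨(i, j), h⟩ else 0

/-- The map `ψ_λ : ℝ^{n²−2} → ℝ^{n(n−1)}`: it keeps all coordinates `y_{i,j}`, `z_{i,j}`
with `j ≤ n−2` and `z_{n−1,n−1}`, and sets `z_{i,n−1} := min(z↑_{i,n−1}, z↓_{i,n−1})`. -/
noncomputable def psiD (n : ℕ) (w : TPt n) : GPt n :=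
  (w.1, fun p =>
    if p.1.1 = n - 1 then tL n w
    else if p.1.2 = n - 1 then min (tU n w p.1.1) (tD n w p.1.1)
    else tZ n w p.1.1 p.1.2)

/-- The map `ρ_λ : ℝ^{n(n−1)} → ℝ^{n²−2}`: it keeps all coordinates `y_{i,j}`, `z_{i,j}`
with `j ≤ n−2` and `z_{n−1,n−1}`, and sets
`z↑_{i,n−1} := z_{i,n−1} + y_{i,n−1} − min(y_{i,n−1}, y_{i+1,n−1})` and
`z↓_{i,n−1} := z_{i,n−1} + y_{i+1,n−1} − min(y_{i,n−1}, y_{i+1,n−1})`. -/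
noncomputable def rhoD (n : ℕ) (lam : ℕ → ℝ) (v : GPt n) : TPt n :=
  (v.1,
   fun p => gZ n v p.1.1 p.1.2,
   fun i => gZ n v i.1 (n - 1) + gY n lam v i.1 (n - 1)
      - min (gY n lam v i.1 (n - 1)) (gY n lam v (i.1 + 1) (n - 1)),
   fun i => gZ n v i.1 (n - 1) + gY n lam v (i.1 + 1) (n - 1)
      - min (gY n lam v i.1 (n - 1)) (gY n lam v (i.1 + 1) (n - 1)),
   gZ n v (n - 1) (n - 1))

private lemma minkeyU (a b u d : ℝ) (h : u - d = a - b) : min u d + a - min a b = u := by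
  rcases le_total a b with hab | hab
  · rw [min_eq_left hab, min_eq_left (show u ≤ d by linarith)]; ring
  · rw [min_eq_right hab, min_eq_right (show d ≤ u by linarith)]; linarith

private lemma minkeyD (a b u d : ℝ) (h : u - d = a - b) : min u d + b - min a b = d := by
  rcases le_total a b with hab | hab
  · rw [min_eq_left hab, min_eq_left (show u ≤ d by linarith)]; linarith
  · rw [min_eq_right hab, min_eq_right (show d ≤ u by linarith)]; ring

private lemma minkeyZ (a b z : ℝ) : min (z + a - min a b) (z + b - min a b) = z := by
  rcases le_total a b with hab | hab
  · rw [min_eq_left hab, min_eq_left (show z + a - a ≤ z + b - a by linarith)]; ring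
  · rw [min_eq_right hab, min_eq_right (show z + b - b ≤ z + a - b by linarith)]; ring

/-- `ρ_λ` takes values in `V_λ`, `ψ_λ ∘ ρ_λ = id`, `ρ_λ ∘ ψ_λ = id` on `V_λ`; in
particular `ψ_λ : V_λ → ℝ^{n(n−1)}` is a bijection with inverse `ρ_λ`. -/
theorem statement8 (n : ℕ) (hn : 3 ≤ n) (lam : ℕ → ℝ) :
    (∀ v : GPt n, rhoD n lam v ∈ Vlam n lam) ∧
    (∀ v : GPt n, psiD n (rhoD n lam v) = v) ∧
    (∀ w ∈ Vlam n lam, rhoD n lam (psiD n w) = w) ∧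
    Set.BijOn (psiD n) (Vlam n lam) Set.univ := by
  have hyr : ∀ v : GPt n, ∀ i j, tY n lam (rhoD n lam v) i j = gY n lam v i j :=
    fun _ _ _ => rfl
  have hyp : ∀ w : TPt n, ∀ i j, gY n lam (psiD n w) i j = tY n lam w i j :=
    fun _ _ _ => rfl
  have hUr : ∀ v : GPt n, ∀ i, 1 ≤ i → i ≤ n - 2 →
      tU n (rhoD n lam v) i = gZ n v i (n - 1) + gY n lam v i (n - 1)
        - min (gY n lam v i (n - 1)) (gY n lam v (i + 1) (n - 1)) := by
    intro v i h1 h2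
    rw [tU, dif_pos ⟨h1, h2⟩]
    rfl
  have hDr : ∀ v : GPt n, ∀ i, 1 ≤ i → i ≤ n - 2 →
      tD n (rhoD n lam v) i = gZ n v i (n - 1) + gY n lam v (i + 1) (n - 1)
        - min (gY n lam v i (n - 1)) (gY n lam v (i + 1) (n - 1)) := by
    intro v i h1 h2
    rw [tD, dif_pos ⟨h1, h2⟩]
    rfl
  have P1 : ∀ v : GPt n, rhoD n lam v ∈ Vlam n lam := by
    intro v i h1 h2
    rw [hUr v i h1 h2, hDr v i h1 h2, hyr, hyr]
    ring
  have P2 : ∀ v : GPt n, psiD n (rhoD n lam v) = v := by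
    intro v
    refine Prod.ext rfl ?_
    funext p
    obtain ⟨⟨i, j⟩, hi, hij, hjn⟩ := p
    simp only [psiD]
    by_cases hi1 : i = n - 1
    · rw [if_pos hi1]
      subst hi1
      have hj : j = n - 1 := le_antisymm hjn hij
      subst hj
      show gZ n v (n - 1) (n - 1) = _
      rw [gZ, dif_pos ⟨hi, hij, hjn⟩]
    · rw [if_neg hi1]
      have h2 : i ≤ n - 2 := by omega
      by_cases hj1 : j = n - 1
      · rw [if_pos hj1]
        subst hj1
        rw [hUr v i hi h2, hDr v i hi h2, minkeyZ]
        rw [gZ, dif_pos ⟨hi, hij, hjn⟩]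
      · rw [if_neg hj1]
        have hj2 : j ≤ n - 2 := by omega
        show tZ n (rhoD n lam v) i j = _
        rw [tZ, dif_pos ⟨hi, hij, hj2⟩]
        show gZ n v i j = _
        rw [gZ, dif_pos ⟨hi, hij, hjn⟩]
  have P3 : ∀ w ∈ Vlam n lam, rhoD n lam (psiD n w) = w := by
    intro w hw
    have hZp : ∀ i j (h1 : 1 ≤ i) (h2 : i ≤ j) (h3 : j ≤ n - 1),
        gZ n (psiD n w) i j = (psiD n w).2 ⟨(i, j), ⟨h1, h2, h3⟩⟩ := by
      intro i j h1 h2 h3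
      rw [gZ, dif_pos ⟨h1, h2, h3⟩]
    refine Prod.ext rfl (Prod.ext ?_ (Prod.ext ?_ (Prod.ext ?_ ?_)))
    · funext p
      obtain ⟨⟨i, j⟩, hi, hij, hjn⟩ := p
      show gZ n (psiD n w) i j = _
      rw [hZp i j hi hij (by omega)]
      show (if i = n - 1 then _ else if j = n - 1 then _ else tZ n w i j) = _
      rw [if_neg (by omega), if_neg (by omega), tZ, dif_pos ⟨hi, hij, hjn⟩]
    · funext p
      obtain ⟨i, h1, h2⟩ := p
      show gZ n (psiD n w) i (n - 1) + gY n lam (psiD n w) i (n - 1)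
          - min (gY n lam (psiD n w) i (n - 1)) (gY n lam (psiD n w) (i + 1) (n - 1)) = _
      rw [hZp i (n - 1) h1 (by omega) le_rfl]
      show (if i = n - 1 then _ else if n - 1 = n - 1 then min (tU n w i) (tD n w i)
          else _) + _ - _ = _
      rw [if_neg (by omega), if_pos rfl, hyp, hyp,
        minkeyU _ _ _ _ (hw i h1 h2), tU, dif_pos ⟨h1, h2⟩]
    · funext p
      obtain ⟨i, h1, h2⟩ := p
      show gZ n (psiD n w) i (n - 1) + gY n lam (psiD n w) (i + 1) (n - 1)
          - min (gY n lam (psiD n w) i (n - 1)) (gY n lam (psiD n w) (i + 1) (n - 1)) = _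
      rw [hZp i (n - 1) h1 (by omega) le_rfl]
      show (if i = n - 1 then _ else if n - 1 = n - 1 then min (tU n w i) (tD n w i)
          else _) + _ - _ = _
      rw [if_neg (by omega), if_pos rfl, hyp, hyp,
        minkeyD _ _ _ _ (hw i h1 h2), tD, dif_pos ⟨h1, h2⟩]
    · show gZ n (psiD n w) (n - 1) (n - 1) = _
      rw [hZp (n - 1) (n - 1) (by omega) le_rfl le_rfl]
      show (if n - 1 = n - 1 then tL n w else _) = _
      rw [if_pos rfl]
      rfl
  refine ⟨P1, P2, P3, ?_⟩
  exact Set.InvOn.bijOn ⟨fun w hw => P3 w hw, fun v _ => P2 v⟩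
    (Set.mapsTo_univ _ _) (fun v _ => P1 v)
end

section
/- Let n ≥ 3 and let λ_1 ≥ … ≥ λ_{n−1} ≥ |λ_n| be real numbers. For every x ∈ V_λ, x belongs to the tweaked Gelfand–Tsetlin polytope tGT(λ) if and only if ψ_λ(x) belongs to the type D_n Gelfand–Tsetlin polytope GT_{D_n}(λ). Consequently ψ_λ restricts to a bijection from tGT(λ) onto GT_{D_n}(λ). -/
/-- The ordinary type `Dₙ` Gelfand–Tsetlin polytope of `λ`. -/
def GTD (n : ℕ) (lam : ℕ → ℝ) : Set (GPt n) :=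
  {v |
    (∀ i j, 1 ≤ i → i ≤ n - 1 → i ≤ j → j ≤ n - 1 →
      gY n lam v i j ≥ gZ n v i j ∧ gZ n v i j ≥ gY n lam v i (j + 1)) ∧
    (∀ i j, 1 ≤ i → i ≤ n - 2 → i + 1 ≤ j → j ≤ n - 1 →
      gZ n v i (j - 1) ≥ gY n lam v (i + 1) j ∧ gY n lam v (i + 1) j ≥ gZ n v i j) ∧
    (∀ i, 1 ≤ i → i ≤ n - 1 → gZ n v i (n - 1) ≥ gY n lam v (i + 1) n) ∧
    (∀ i, 1 ≤ i → i ≤ n - 2 →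
      gZ n v i (n - 1) ≤ gY n lam v i n + gY n lam v (i + 1) n +
        min (gY n lam v i (n - 1)) (gY n lam v (i + 1) (n - 1))) ∧
    gZ n v (n - 1) (n - 1) ≤
      gY n lam v (n - 1) (n - 1) + gY n lam v (n - 1) n + gY n lam v n n}

section Aux

variable {n : ℕ}

private lemma minlem {u d a b : ℝ} (h : u - d = a - b) :
    min u d = u - a + min a b ∧ min u d = d - b + min a b := by
  rcases le_total a b with hab | hab
  · rw [min_eq_left hab, min_eq_left (by linarith : u ≤ d)]
    constructor <;> linarith
  · rw [min_eq_right hab, min_eq_right (by linarith : d ≤ u)]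
    constructor <;> linarith

private lemma gY_psi (lam : ℕ → ℝ) (x : TPt n) (i j : ℕ) :
    gY n lam (psiD n x) i j = tY n lam x i j := rfl

private lemma gZ_psi_low (x : TPt n) {i j : ℕ} (h1 : 1 ≤ i) (h2 : i ≤ j) (h3 : j ≤ n - 2) :
    gZ n (psiD n x) i j = tZ n x i j := by
  have hc : 1 ≤ i ∧ i ≤ j ∧ j ≤ n - 1 := ⟨h1, h2, by omega⟩
  have e : gZ n (psiD n x) i j = (psiD n x).2 ⟨(i, j), hc⟩ := dif_pos hc
  rw [e]
  show (if i = n - 1 then _ else if j = n - 1 then _ else tZ n x i j) = tZ n x i j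
  rw [if_neg (by omega), if_neg (by omega)]

private lemma gZ_psi_mid (hn : 3 ≤ n) (x : TPt n) {i : ℕ} (h1 : 1 ≤ i) (h2 : i ≤ n - 2) :
    gZ n (psiD n x) i (n - 1) = min (tU n x i) (tD n x i) := by
  have hc : 1 ≤ i ∧ i ≤ n - 1 ∧ n - 1 ≤ n - 1 := ⟨h1, by omega, le_rfl⟩
  have e : gZ n (psiD n x) i (n - 1) = (psiD n x).2 ⟨(i, n - 1), hc⟩ := dif_pos hc
  rw [e]
  show (if i = n - 1 then _ else if n - 1 = n - 1 then min (tU n x i) (tD n x i) else _) = _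
  rw [if_neg (by omega), if_pos rfl]

private lemma gZ_psi_last (hn : 3 ≤ n) (x : TPt n) :
    gZ n (psiD n x) (n - 1) (n - 1) = tL n x := by
  have hc : 1 ≤ n - 1 ∧ n - 1 ≤ n - 1 ∧ n - 1 ≤ n - 1 := ⟨by omega, le_rfl, le_rfl⟩
  have e : gZ n (psiD n x) (n - 1) (n - 1) = (psiD n x).2 ⟨(n - 1, n - 1), hc⟩ := dif_pos hc
  rw [e]
  show (if n - 1 = n - 1 then tL n x else _) = _
  rw [if_pos rfl]

private lemma tY_rho (lam : ℕ → ℝ) (v : GPt n) (i j : ℕ) :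
    tY n lam (rhoD n lam v) i j = gY n lam v i j := rfl

private lemma tZ_rho (lam : ℕ → ℝ) (v : GPt n) {i j : ℕ}
    (h : 1 ≤ i ∧ i ≤ j ∧ j ≤ n - 2) :
    tZ n (rhoD n lam v) i j = gZ n v i j := dif_pos h

private lemma tU_rho (lam : ℕ → ℝ) (v : GPt n) {i : ℕ} (h : 1 ≤ i ∧ i ≤ n - 2) :
    tU n (rhoD n lam v) i = gZ n v i (n - 1) + gY n lam v i (n - 1)
      - min (gY n lam v i (n - 1)) (gY n lam v (i + 1) (n - 1)) := dif_pos h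

private lemma tD_rho (lam : ℕ → ℝ) (v : GPt n) {i : ℕ} (h : 1 ≤ i ∧ i ≤ n - 2) :
    tD n (rhoD n lam v) i = gZ n v i (n - 1) + gY n lam v (i + 1) (n - 1)
      - min (gY n lam v i (n - 1)) (gY n lam v (i + 1) (n - 1)) := dif_pos h

private lemma tL_rho (lam : ℕ → ℝ) (v : GPt n) :
    tL n (rhoD n lam v) = gZ n v (n - 1) (n - 1) := rfl

private lemma rho_mem_V (lam : ℕ → ℝ) (v : GPt n) : rhoD n lam v ∈ Vlam n lam := by
  intro i h1 h2
  rw [tU_rho lam v ⟨h1, h2⟩, tD_rho lam v ⟨h1, h2⟩, tY_rho, tY_rho]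
  ring

private lemma psi_rho (hn : 3 ≤ n) (lam : ℕ → ℝ) (v : GPt n) :
    psiD n (rhoD n lam v) = v := by
  refine Prod.ext rfl ?_
  funext p
  obtain ⟨⟨i, j⟩, hp⟩ := p
  obtain ⟨hp1, hp2, hp3⟩ := hp
  show (if i = n - 1 then tL n (rhoD n lam v)
    else if j = n - 1 then min (tU n (rhoD n lam v) i) (tD n (rhoD n lam v) i)
    else tZ n (rhoD n lam v) i j) = _
  by_cases hi : i = n - 1
  · have hj : j = n - 1 := by omega
    subst hi hj
    rw [if_pos rfl, tL_rho]
    exact dif_pos _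
  · rw [if_neg hi]
    by_cases hj : j = n - 1
    · subst hj
      have hi2 : 1 ≤ i ∧ i ≤ n - 2 := ⟨hp1, by omega⟩
      rw [if_pos rfl, tU_rho lam v hi2, tD_rho lam v hi2]
      set z := gZ n v i (n - 1) with hz
      set a := gY n lam v i (n - 1)
      set b := gY n lam v (i + 1) (n - 1)
      have : min (z + a - min a b) (z + b - min a b) = z := by
        rcases le_total a b with hab | hab
        · rw [min_eq_left hab, min_eq_left (by linarith : z + a - a ≤ z + b - a)]
          ring
        · rw [min_eq_right hab, min_eq_right (by linarith : z + b - b ≤ z + a - b)]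
          ring
      rw [this, hz]
      exact dif_pos _
    · rw [if_neg hj, tZ_rho lam v ⟨hp1, hp2, by omega⟩]
      exact dif_pos _

private lemma rho_psi (hn : 3 ≤ n) (lam : ℕ → ℝ) (x : TPt n) (hx : x ∈ Vlam n lam) :
    rhoD n lam (psiD n x) = x := by
  refine Prod.ext rfl (Prod.ext ?_ (Prod.ext ?_ (Prod.ext ?_ ?_)))
  · funext p
    show gZ n (psiD n x) p.1.1 p.1.2 = x.2.1 p
    rw [gZ_psi_low x p.2.1 p.2.2.1 p.2.2.2]
    exact dif_pos p.2
  · funext p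
    show gZ n (psiD n x) p.1 (n - 1) + tY n lam x p.1 (n - 1)
      - min (tY n lam x p.1 (n - 1)) (tY n lam x (p.1 + 1) (n - 1)) = x.2.2.1 p
    rw [gZ_psi_mid hn x p.2.1 p.2.2]
    have e := (minlem (hx p.1 p.2.1 p.2.2)).1
    have hu : tU n x p.1 = x.2.2.1 p := dif_pos p.2
    rw [← hu]
    linarith
  · funext p
    show gZ n (psiD n x) p.1 (n - 1) + tY n lam x (p.1 + 1) (n - 1)
      - min (tY n lam x p.1 (n - 1)) (tY n lam x (p.1 + 1) (n - 1)) = x.2.2.2.1 p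
    rw [gZ_psi_mid hn x p.2.1 p.2.2]
    have e := (minlem (hx p.1 p.2.1 p.2.2)).2
    have hd : tD n x p.1 = x.2.2.2.1 p := dif_pos p.2
    rw [← hd]
    linarith
  · show gZ n (psiD n x) (n - 1) (n - 1) = x.2.2.2.2
    rw [gZ_psi_last hn]
    rfl

private lemma main_iff (hn : 3 ≤ n) (lam : ℕ → ℝ) (x : TPt n) (hV : x ∈ Vlam n lam) :
    x ∈ tGT n lam ↔ psiD n x ∈ GTD n lam := by
  have hn1 : n - 1 + 1 = n := by omega
  have hn2 : n - 1 - 1 = n - 2 := by omega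
  constructor
  · rintro ⟨-, h1, h2, h3, h4, h5⟩
    refine ⟨?_, ?_, ?_, ?_, ?_⟩
    · intro i j hi1 hi2 hij hj
      simp only [gY_psi]
      by_cases hi : i = n - 1
      · have hj' : j = n - 1 := by omega
        subst hi hj'
        rw [gZ_psi_last hn, hn1]
        exact ⟨h5.1, le_trans (le_max_left _ _) h5.2.1⟩
      · by_cases hj' : j = n - 1
        · subst hj'
          rw [gZ_psi_mid hn x hi1 (by omega), hn1]
          obtain ⟨ha, hu, -, hb, hd, -⟩ := h4 i hi1 (by omega)
          exact ⟨le_trans (min_le_left _ _) ha,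
            le_min (le_trans (le_max_left _ _) hu) (le_trans (le_max_left _ _) hd)⟩
        · rw [gZ_psi_low x hi1 hij (by omega)]
          exact h1 i j hi1 (by omega) hij (by omega)
    · intro i j hi1 hi2 hj1 hj2
      simp only [gY_psi]
      by_cases hj : j = n - 1
      · subst hj
        rw [hn2, gZ_psi_low x hi1 (by omega) le_rfl, gZ_psi_mid hn x hi1 hi2]
        obtain ⟨-, -, -, hb, -, -⟩ := h4 i hi1 hi2
        exact ⟨h3 i hi1 hi2, le_trans (min_le_right _ _) hb⟩
      · rw [gZ_psi_low x hi1 (by omega) (by omega), gZ_psi_low x hi1 (by omega) (by omega)]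
        exact h2 i j hi1 hi2 hj1 (by omega)
    · intro i hi1 hi2
      simp only [gY_psi]
      by_cases hi : i = n - 1
      · subst hi
        rw [gZ_psi_last hn, hn1]
        exact le_trans (le_max_right _ _) h5.2.1
      · rw [gZ_psi_mid hn x hi1 (by omega)]
        obtain ⟨-, hu, -, -, hd, -⟩ := h4 i hi1 (by omega)
        exact le_min (le_trans (le_max_right _ _) hu) (le_trans (le_max_right _ _) hd)
    · intro i hi1 hi2
      simp only [gY_psi]
      rw [gZ_psi_mid hn x hi1 hi2]
      obtain ⟨e1, e2⟩ := minlem (hV i hi1 hi2)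
      obtain ⟨-, -, hus, -, -, -⟩ := h4 i hi1 hi2
      linarith
    · simp only [gY_psi]
      rw [gZ_psi_last hn]
      exact h5.2.2
  · rintro ⟨g1, g2, g3, g4, g5⟩
    simp only [gY_psi] at g1 g2 g3 g4 g5
    refine ⟨hV, ?_, ?_, ?_, ?_, ?_⟩
    · intro i j hi1 hi2 hij hj
      have := g1 i j hi1 (by omega) hij (by omega)
      rwa [gZ_psi_low x hi1 hij hj] at this
    · intro i j hi1 hi2 hj1 hj2
      have := g2 i j hi1 hi2 hj1 (by omega)
      rwa [gZ_psi_low x hi1 (by omega) (by omega),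
        gZ_psi_low x hi1 (by omega) (by omega)] at this
    · intro i hi1 hi2
      have := (g2 i (n - 1) hi1 hi2 (by omega) le_rfl).1
      rwa [hn2, gZ_psi_low x hi1 (by omega) le_rfl] at this
    · intro i hi1 hi2
      obtain ⟨e1, e2⟩ := minlem (hV i hi1 hi2)
      have ga := g1 i (n - 1) hi1 (by omega) (by omega) le_rfl
      rw [gZ_psi_mid hn x hi1 hi2, hn1] at ga
      have gb := (g2 i (n - 1) hi1 hi2 (by omega) le_rfl).2
      rw [gZ_psi_mid hn x hi1 hi2] at gb
      have gc := g3 i hi1 (by omega)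
      rw [gZ_psi_mid hn x hi1 hi2] at gc
      have gd := g4 i hi1 hi2
      rw [gZ_psi_mid hn x hi1 hi2] at gd
      set a := tY n lam x i (n - 1)
      set b := tY n lam x (i + 1) (n - 1)
      set z := min (tU n x i) (tD n x i)
      have hzm : z ≤ min a b := le_min (by linarith [ga.1]) (by linarith [gb])
      have hma : min a b ≤ a := min_le_left _ _
      have hmb : min a b ≤ b := min_le_right _ _
      have hmax : max (tY n lam x i n) (tY n lam x (i + 1) n) ≤ z :=
        max_le (by linarith [ga.2]) (by linarith [gc])
      refine ⟨by linarith, le_trans hmax (by linarith), by linarith,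
        by linarith, le_trans hmax (by linarith), by linarith⟩
    · have ga := g1 (n - 1) (n - 1) (by omega) le_rfl le_rfl le_rfl
      rw [gZ_psi_last hn, hn1] at ga
      have gc := g3 (n - 1) (by omega) le_rfl
      rw [gZ_psi_last hn, hn1] at gc
      rw [gZ_psi_last hn] at g5
      exact ⟨ga.1, max_le ga.2 gc, g5⟩

end Aux

/-- For `x ∈ V_λ`, `x` lies in the tweaked Gelfand–Tsetlin polytope if and only if
`ψ_λ(x)` lies in the ordinary type `Dₙ` Gelfand–Tsetlin polytope; consequently `ψ_λ`
restricts to a bijection from `tGT(λ)` onto `GT_{Dₙ}(λ)`. -/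


theorem statement9 (n : ℕ) (hn : 3 ≤ n) (lam : ℕ → ℝ)
    (hmono : ∀ j, 1 ≤ j → j + 1 ≤ n - 1 → lam (j + 1) ≤ lam j)
    (habs : |lam n| ≤ lam (n - 1)) :
    (∀ x ∈ Vlam n lam, (x ∈ tGT n lam ↔ psiD n x ∈ GTD n lam)) ∧
    Set.BijOn (psiD n) (tGT n lam) (GTD n lam) := by
  refine ⟨fun x hx => main_iff hn lam x hx, fun x hx => (main_iff hn lam x hx.1).mp hx, ?_, ?_⟩
  · intro a ha b hb hab
    have h := congrArg (rhoD n lam) hab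
    rwa [rho_psi hn lam a ha.1, rho_psi hn lam b hb.1] at h
  · intro v hv
    refine ⟨rhoD n lam v, ?_, psi_rho hn lam v⟩
    have hV := rho_mem_V lam v
    refine (main_iff hn lam _ hV).mpr ?_
    rw [psi_rho hn lam v]
    exact hv
end

section
/- Let n ≥ 3 and λ = (λ_1, …, λ_n) ∈ ℝ^n. Then every vertex (extreme point) x of the tweaked Gelfand–Tsetlin polytope tGT(λ) has all of its coordinates in the additive subgroup ℤλ_1 + ℤλ_2 + … + ℤλ_n of ℝ generated by λ_1, …, λ_n. -/
/-!
Let `G` be any additive subgroup of `ℝ` containing `λ_1, …, λ_n`, and let `r v := v` if `v ∉ G`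
and `r v := 0` if `v ∈ G`; so `r` is odd and vanishes exactly on `G`. At a point `x` of `tGT(λ)`
move every coordinate `v` with velocity `r v`. An inequality `v ≤ w` that is tight at `x` stays
tight, because both sides move alike, and a slack one survives for small times. The constraints
`max(a, b) ≤ w ≤ p`, `w ≤ p + a + b` need care: when `a + b < 0`, `w` moves as
`(w - a - b) + a + b`. Of `z↑_{i,n-1} ≤ y_{i,n-1}` and `z↓_{i,n-1} ≤ y_{i+1,n-1}`, the one with
the smaller bound moves this way and the other follows the equation of `V_λ`. The resulting
velocity `d` satisfies `x ± t d ∈ tGT(λ)` for small `t`; at a vertex this forces `d = 0`, which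
says that every coordinate lies in `G`.
-/
open Filter Topology

theorem eq_zero_of_eventually_add_smul_mem {E : Type*} [AddCommGroup E] [Module ℝ E]
    {S : Set E} {x d : E} (hx : x ∈ S.extremePoints ℝ) (h : ∀ᶠ t in 𝓝 (0 : ℝ), x + t • d ∈ S) :
    d = 0 := by
  obtain ⟨ε, hε, hS⟩ := Metric.eventually_nhds_iff.1 h
  have hpos : x + (ε / 2) • d ∈ S := hS (by simp [abs_of_pos hε]; linarith)
  have hneg : x + (-(ε / 2)) • d ∈ S := hS (by simp [abs_of_pos hε]; linarith)
  have hmid : x ∈ openSegment ℝ (x + (ε / 2) • d) (x + (-(ε / 2)) • d) :=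
    ⟨1 / 2, 1 / 2, by norm_num, by norm_num, by norm_num, by module⟩
  simpa [hε.ne'] using hx.2 hpos hneg hmid

theorem eventually_forall_between {α : Type*} {l : Filter α} {P : ℕ → α → Prop} {m N : ℕ}
    (h : ∀ i, m ≤ i → i ≤ N → ∀ᶠ a in l, P i a) : ∀ᶠ a in l, ∀ i, m ≤ i → i ≤ N → P i a :=
  ((Set.finite_Icc m N).eventually_all.2 fun i hi => h i hi.1 hi.2).mono
    fun _ ha i h1 h2 => ha i ⟨h1, h2⟩

theorem eventually_add_mul_le_add_mul {v w dv dw : ℝ} (h : v ≤ w) (heq : v = w → dv = dw) :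
    ∀ᶠ t in 𝓝 (0 : ℝ), v + t * dv ≤ w + t * dw := by
  rcases h.eq_or_lt with rfl | hlt
  · simp [heq rfl]
  · refine (ContinuousAt.eventually_lt (by fun_prop) (by fun_prop) ?_).mono fun _ => le_of_lt
    simpa using hlt

def TweakedBounds (p w a b : ℝ) : Prop := w ≤ p ∧ max a b ≤ w ∧ w ≤ p + a + b

theorem TweakedBounds.shift {p q d a b : ℝ} (h : TweakedBounds q d a b) (hqp : q ≤ p) :
    TweakedBounds p (d + (p - q)) a b :=
  ⟨by linarith [h.1], h.2.1.trans (by linarith), by linarith [h.2.2]⟩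

namespace AddSubgroup

variable (G : AddSubgroup ℝ)

open Classical in
noncomputable def nonMemPart (v : ℝ) : ℝ := if v ∈ G then 0 else v

/-- When `a + b < 0` the bound `w ≤ p` is slack, so `w` may move with `w - a - b`, `a`, `b`. -/
noncomputable def tweakDir (w a b : ℝ) : ℝ :=
  if 0 ≤ a + b then G.nonMemPart w else G.nonMemPart (w - a - b) + G.nonMemPart a + G.nonMemPart b

noncomputable def coupledDir (u d p q a b : ℝ) : ℝ × ℝ :=
  if q ≤ p then (G.tweakDir d a b + G.nonMemPart p - G.nonMemPart q, G.tweakDir d a b)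
  else (G.tweakDir u a b, G.tweakDir u a b + G.nonMemPart q - G.nonMemPart p)

variable {G}

theorem nonMemPart_of_mem {v : ℝ} (h : v ∈ G) : G.nonMemPart v = 0 := if_pos h

theorem nonMemPart_eq_zero_iff {v : ℝ} : G.nonMemPart v = 0 ↔ v ∈ G := by
  unfold nonMemPart
  split_ifs with h
  · simp [h]
  · exact ⟨fun h0 => (h (h0 ▸ G.zero_mem)).elim, fun hv => (h hv).elim⟩

theorem nonMemPart_neg (v : ℝ) : G.nonMemPart (-v) = -G.nonMemPart v := by
  by_cases h : v ∈ G <;> simp [nonMemPart, h]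

theorem eventually_add_mul_nonMemPart_le {v w : ℝ} (h : v ≤ w) :
    ∀ᶠ t in 𝓝 (0 : ℝ), v + t * G.nonMemPart v ≤ w + t * G.nonMemPart w :=
  eventually_add_mul_le_add_mul h (congrArg _)

theorem eventually_tweakedBounds {p w a b : ℝ} (h : TweakedBounds p w a b) :
    ∀ᶠ t in 𝓝 (0 : ℝ), TweakedBounds (p + t * G.nonMemPart p) (w + t * G.tweakDir w a b)
      (a + t * G.nonMemPart a) (b + t * G.nonMemPart b) := by
  obtain ⟨hwp, hab, hsum⟩ := h
  rw [max_le_iff] at hab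
  have hregroup (t : ℝ) :
      p + t * G.nonMemPart p + (a + t * G.nonMemPart a) + (b + t * G.nonMemPart b) =
        p + a + b + t * (G.nonMemPart p + G.nonMemPart a + G.nonMemPart b) := by ring
  simp only [TweakedBounds, max_le_iff, hregroup]
  unfold tweakDir
  split_ifs with hab_nonneg
  · refine (eventually_add_mul_le_add_mul hwp (congrArg _)).and <|
      ((eventually_add_mul_le_add_mul hab.1 (congrArg _)).and
        (eventually_add_mul_le_add_mul hab.2 (congrArg _))).and
      (eventually_add_mul_le_add_mul hsum fun heq => ?_)
    rw [show w = p by linarith, show b = -a by linarith, nonMemPart_neg]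
    ring
  · refine (eventually_add_mul_le_add_mul hwp fun heq => by linarith).and <|
      ((eventually_add_mul_le_add_mul hab.1 fun heq => ?_).and
        (eventually_add_mul_le_add_mul hab.2 fun heq => ?_)).and
      (eventually_add_mul_le_add_mul hsum fun heq => ?_)
    · rw [show w - a - b = -b by linarith, nonMemPart_neg]; ring
    · rw [show w - a - b = -a by linarith, nonMemPart_neg]; ring
    · rw [show w - a - b = p by linarith]

theorem mem_of_tweakDir_eq_zero {w a b : ℝ} (ha : a ∈ G) (hb : b ∈ G)
    (h : G.tweakDir w a b = 0) : w ∈ G := by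
  unfold tweakDir at h
  rw [nonMemPart_of_mem ha, nonMemPart_of_mem hb, add_zero, add_zero] at h
  split_ifs at h
  · exact nonMemPart_eq_zero_iff.1 h
  · convert add_mem (add_mem (nonMemPart_eq_zero_iff.1 h) ha) hb using 1
    ring

theorem coupledDir_fst_sub_snd (u d p q a b : ℝ) :
    (G.coupledDir u d p q a b).1 - (G.coupledDir u d p q a b).2 =
      G.nonMemPart p - G.nonMemPart q := by
  unfold coupledDir
  split_ifs <;> ring

theorem eventually_tweakedBounds_shift {p q d a b : ℝ} (hqp : q ≤ p)
    (h : TweakedBounds q d a b) :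
    ∀ᶠ t in 𝓝 (0 : ℝ),
      TweakedBounds (p + t * G.nonMemPart p)
        (d + t * G.tweakDir d a b + (p + t * G.nonMemPart p - (q + t * G.nonMemPart q)))
        (a + t * G.nonMemPart a) (b + t * G.nonMemPart b) ∧
      TweakedBounds (q + t * G.nonMemPart q) (d + t * G.tweakDir d a b)
        (a + t * G.nonMemPart a) (b + t * G.nonMemPart b) :=
  ((eventually_tweakedBounds h).and (eventually_add_mul_nonMemPart_le hqp)).mono
    fun _ h => ⟨h.1.shift h.2, h.1⟩

theorem eventually_tweakedBounds_coupled {u d p q a b : ℝ} (hu : TweakedBounds p u a b)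
    (hd : TweakedBounds q d a b) (hud : u - d = p - q) :
    ∀ᶠ t in 𝓝 (0 : ℝ),
      TweakedBounds (p + t * G.nonMemPart p) (u + t * (G.coupledDir u d p q a b).1)
        (a + t * G.nonMemPart a) (b + t * G.nonMemPart b) ∧
      TweakedBounds (q + t * G.nonMemPart q) (d + t * (G.coupledDir u d p q a b).2)
        (a + t * G.nonMemPart a) (b + t * G.nonMemPart b) := by
  unfold coupledDir
  split_ifs with hqp
  · refine (eventually_tweakedBounds_shift hqp hd).mono fun t h => ⟨?_, h.2⟩
    convert h.1 using 1
    linear_combination hud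
  · refine (eventually_tweakedBounds_shift (le_of_not_ge hqp) hu).mono fun t h => ⟨h.2, ?_⟩
    convert h.1 using 1
    linear_combination -hud

theorem mem_of_coupledDir_eq_zero {u d p q a b : ℝ} (ha : a ∈ G) (hb : b ∈ G) (hp : p ∈ G)
    (hq : q ∈ G) (hud : u - d = p - q) (h : G.coupledDir u d p q a b = 0) : u ∈ G ∧ d ∈ G := by
  unfold coupledDir at h
  split_ifs at h
  · have hd := mem_of_tweakDir_eq_zero ha hb (congrArg Prod.snd h)
    exact ⟨by simpa [show u = d + (p - q) by linarith] using add_mem hd (sub_mem hp hq), hd⟩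
  · have hu := mem_of_tweakDir_eq_zero ha hb (congrArg Prod.fst h)
    exact ⟨hu, by simpa [show d = u - (p - q) by linarith] using sub_mem hu (sub_mem hp hq)⟩

end AddSubgroup

namespace TweakedGT

open AddSubgroup

variable {n : ℕ} (G : AddSubgroup ℝ) (lam : ℕ → ℝ)

noncomputable def junctionDir (x : TPt n) (i : ℕ) : ℝ × ℝ :=
  G.coupledDir (tU n x i) (tD n x i) (tY n lam x i (n - 1)) (tY n lam x (i + 1) (n - 1))
    (tY n lam x i n) (tY n lam x (i + 1) n)

noncomputable def perturbation (x : TPt n) : TPt n :=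
  (fun p => G.nonMemPart (x.1 p), fun p => G.nonMemPart (x.2.1 p),
    fun i => (junctionDir G lam x i).1, fun i => (junctionDir G lam x i).2,
    G.tweakDir (tL n x) (tY n lam x (n - 1) n) (tY n lam x n n))

variable {G lam} (x : TPt n) (t : ℝ)

theorem tY_add_smul_perturbation (hlam : ∀ j, 1 ≤ j → j ≤ n → lam j ∈ G) (i j : ℕ) :
    tY n lam (x + t • perturbation G lam x) i j =
      tY n lam x i j + t * G.nonMemPart (tY n lam x i j) := by
  simp only [tY]
  split_ifs with h1 h2
  · simp [nonMemPart_of_mem (hlam j h1.2.1 h1.2.2)]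
  · simp [perturbation]
  · simp [nonMemPart_of_mem G.zero_mem]

theorem tZ_add_smul_perturbation (i j : ℕ) :
    tZ n (x + t • perturbation G lam x) i j = tZ n x i j + t * G.nonMemPart (tZ n x i j) := by
  simp only [tZ]
  split_ifs
  · simp [perturbation]
  · simp [nonMemPart_of_mem G.zero_mem]

theorem tU_add_smul_perturbation {i : ℕ} (hi : 1 ≤ i ∧ i ≤ n - 2) :
    tU n (x + t • perturbation G lam x) i = tU n x i + t * (junctionDir G lam x i).1 := by
  simp [tU, hi, perturbation]

theorem tD_add_smul_perturbation {i : ℕ} (hi : 1 ≤ i ∧ i ≤ n - 2) :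
    tD n (x + t • perturbation G lam x) i = tD n x i + t * (junctionDir G lam x i).2 := by
  simp [tD, hi, perturbation]

theorem tL_add_smul_perturbation :
    tL n (x + t • perturbation G lam x) =
      tL n x + t * G.tweakDir (tL n x) (tY n lam x (n - 1) n) (tY n lam x n n) := by
  simp [tL, perturbation]

theorem eventually_add_smul_perturbation_mem (hlam : ∀ j, 1 ≤ j → j ≤ n → lam j ∈ G)
    (hx : x ∈ tGT n lam) : ∀ᶠ t in 𝓝 (0 : ℝ), x + t • perturbation G lam x ∈ tGT n lam := by
  obtain ⟨hV, hyzy, hzyz, hzy, hjunc, hL⟩ := hx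
  simp only [tGT, Vlam, Set.mem_ofPred_eq, tY_add_smul_perturbation _ _ hlam,
    tZ_add_smul_perturbation, tL_add_smul_perturbation]
  refine (Eventually.of_forall fun t i h1 h2 => ?_).and <| Eventually.and ?_ <|
    Eventually.and ?_ <| Eventually.and ?_ <| Eventually.and ?_ (eventually_tweakedBounds hL)
  · have hdiff : (junctionDir G lam x i).1 - (junctionDir G lam x i).2 = _ :=
      coupledDir_fst_sub_snd ..
    rw [tU_add_smul_perturbation _ _ ⟨h1, h2⟩, tD_add_smul_perturbation _ _ ⟨h1, h2⟩]
    linear_combination hV i h1 h2 + t * hdiff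
  · refine (eventually_forall_between fun i h1 h2 =>
      eventually_forall_between fun j h3 h4 => ?_).mono fun t h i j h1 h2 h3 h4 => h i h1 h2 j h3 h4
    exact (eventually_add_mul_nonMemPart_le (hyzy i j h1 h2 h3 h4).1).and
      (eventually_add_mul_nonMemPart_le (hyzy i j h1 h2 h3 h4).2)
  · refine (eventually_forall_between fun i h1 h2 =>
      eventually_forall_between fun j h3 h4 => ?_).mono fun t h i j h1 h2 h3 h4 => h i h1 h2 j h3 h4
    exact (eventually_add_mul_nonMemPart_le (hzyz i j h1 h2 h3 h4).1).and
      (eventually_add_mul_nonMemPart_le (hzyz i j h1 h2 h3 h4).2)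
  · exact eventually_forall_between fun i h1 h2 => eventually_add_mul_nonMemPart_le (hzy i h1 h2)
  · refine eventually_forall_between fun i h1 h2 => ?_
    obtain ⟨hu1, hu2, hu3, hd1, hd2, hd3⟩ := hjunc i h1 h2
    simp only [tU_add_smul_perturbation _ _ ⟨h1, h2⟩, tD_add_smul_perturbation _ _ ⟨h1, h2⟩]
    refine (eventually_tweakedBounds_coupled ⟨hu1, hu2, hu3⟩ ⟨hd1, hd2, hd3⟩ ?_).mono
      fun t ⟨⟨hu1, hu2, hu3⟩, ⟨hd1, hd2, hd3⟩⟩ => ⟨hu1, hu2, hu3, hd1, hd2, hd3⟩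
    linear_combination hV i h1 h2

theorem coords_mem_of_perturbation_eq_zero (hlam : ∀ j, 1 ≤ j → j ≤ n → lam j ∈ G)
    (hV : x ∈ Vlam n lam) (h : perturbation G lam x = 0) :
    (∀ p, x.1 p ∈ G) ∧ (∀ p, x.2.1 p ∈ G) ∧ (∀ p, x.2.2.1 p ∈ G) ∧ (∀ p, x.2.2.2.1 p ∈ G) ∧
      x.2.2.2.2 ∈ G := by
  simp only [perturbation, Prod.mk_eq_zero, funext_iff, Pi.zero_apply] at h
  obtain ⟨hy, hz, hu, hd, hL⟩ := h
  have hY (i j : ℕ) : tY n lam x i j ∈ G := by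
    unfold tY
    split_ifs with h1 h2
    exacts [hlam j h1.2.1 h1.2.2, nonMemPart_eq_zero_iff.1 (hy _), G.zero_mem]
  have hUD (p : DUIdx n) : x.2.2.1 p ∈ G ∧ x.2.2.2.1 p ∈ G := by
    simpa [tU, tD, p.2] using mem_of_coupledDir_eq_zero (hY _ _) (hY _ _) (hY _ _) (hY _ _)
      (hV p.1 p.2.1 p.2.2) (Prod.ext (hu p) (hd p))
  exact ⟨fun p => nonMemPart_eq_zero_iff.1 (hy p), fun p => nonMemPart_eq_zero_iff.1 (hz p),
    fun p => (hUD p).1, fun p => (hUD p).2, mem_of_tweakDir_eq_zero (hY _ _) (hY _ _) hL⟩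

end TweakedGT

theorem statement10_general (n : ℕ) (lam : ℕ → ℝ)
    (x : TPt n) (hx : x ∈ (tGT n lam).extremePoints ℝ) :
    (∀ p, x.1 p ∈ AddSubgroup.closure (lam '' Set.Icc 1 n)) ∧
    (∀ p, x.2.1 p ∈ AddSubgroup.closure (lam '' Set.Icc 1 n)) ∧
    (∀ p, x.2.2.1 p ∈ AddSubgroup.closure (lam '' Set.Icc 1 n)) ∧
    (∀ p, x.2.2.2.1 p ∈ AddSubgroup.closure (lam '' Set.Icc 1 n)) ∧
    x.2.2.2.2 ∈ AddSubgroup.closure (lam '' Set.Icc 1 n) := by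
  have hlam : ∀ j, 1 ≤ j → j ≤ n → lam j ∈ AddSubgroup.closure (lam '' Set.Icc 1 n) :=
    fun j h1 h2 => AddSubgroup.subset_closure ⟨j, ⟨h1, h2⟩, rfl⟩
  have hpert := eq_zero_of_eventually_add_smul_mem hx
    (TweakedGT.eventually_add_smul_perturbation_mem x hlam hx.1)
  exact TweakedGT.coords_mem_of_perturbation_eq_zero x hlam hx.1.1 hpert

/-- Every vertex of the tweaked Gelfand–Tsetlin polytope has all of its coordinates in
the additive subgroup of `ℝ` generated by `λ_1, …, λ_n`. -/
theorem statement10 (n : ℕ) (hn : 3 ≤ n) (lam : ℕ → ℝ)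
    (x : TPt n) (hx : x ∈ (tGT n lam).extremePoints ℝ) :
    (∀ p, x.1 p ∈ AddSubgroup.closure (lam '' Set.Icc 1 n)) ∧
    (∀ p, x.2.1 p ∈ AddSubgroup.closure (lam '' Set.Icc 1 n)) ∧
    (∀ p, x.2.2.1 p ∈ AddSubgroup.closure (lam '' Set.Icc 1 n)) ∧
    (∀ p, x.2.2.2.1 p ∈ AddSubgroup.closure (lam '' Set.Icc 1 n)) ∧
    x.2.2.2.2 ∈ AddSubgroup.closure (lam '' Set.Icc 1 n) :=
  statement10_general n lam x hx
end

section
/- Let n ≥ 4 and let λ_1 ≥ … ≥ λ_{n−1} ≥ |λ_n| be real numbers with λ_i ∈ ½ + ℤ for all 1 ≤ i ≤ n. Then the tweaked Gelfand–Tsetlin polytope tGT(λ) has a vertex (extreme point) at least one of whose coordinates equals 0; in particular, tGT(λ) has a vertex not all of whose coordinates lie in ½ + ℤ. -/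
/-!
Write `n = m + 2`. The vertex is the pattern `X` with `y_{i,j} = λ_j` and `z_{i,j} = λ_{j+1}`
on the interlacing part (`i ≤ n − 2`, `j ≤ n − 1`), `z↑_1 = z↓_1 = min(λ_{n−1}, λ_{n−1} + λ_n)`,
`z↑_{n−2} = λ_{n−1}`, and `0` in every other coordinate, in particular `z_{n−1,n−1} = 0`.

A point `x` of a set `S` is extreme as soon as it is the only point of `S` at which every
inequality `f ≤ g` valid on `S` (`f` convex, `g` concave) and tight at `x` is tight: if `x` lies
inside a segment of `S`, such an inequality is tight at both ends. At `X` the tight interlacing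
inequalities force `y_{i,j} = λ_j` row by row; the bounds on `z↓_{n−2}` give
`z↓_{n−2} = y_{n−2,n} = y_{n−1,n} = y_{n−1,n−1} = y_{n−1,n−1} + y_{n−2,n} + y_{n−1,n}`, so all
of these vanish; the lower bounds on the `z↑_i` carry `y_{i,n} = 0` down to `i = 2`, after which
the concave bound `z↑_1 ≤ min(λ_{n−1}, λ_{n−1} + λ_n + y_{2,n})` pins `z↑_1`; finally the equations
of `V_λ` give the `z↓_i`.
-/

open Set

section TightFace

variable {𝕜 E : Type*} [Field 𝕜] [LinearOrder 𝕜] [AddCommGroup E] [Module 𝕜 E]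

theorem convexOn_univ_of_map_combo {f : E → 𝕜}
    (hf : ∀ x y (a b : 𝕜), a + b = 1 → f (a • x + b • y) = a * f x + b * f y) :
    ConvexOn 𝕜 univ f :=
  ⟨convex_univ, fun x _ y _ a b _ _ hab => (hf x y a b hab).le⟩

theorem concaveOn_univ_of_map_combo {f : E → 𝕜}
    (hf : ∀ x y (a b : 𝕜), a + b = 1 → f (a • x + b • y) = a * f x + b * f y) :
    ConcaveOn 𝕜 univ f :=
  ⟨convex_univ, fun x _ y _ a b _ _ hab => (hf x y a b hab).ge⟩

variable [IsStrictOrderedRing 𝕜]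

variable (𝕜) in
def tightFace (S : Set E) (x : E) : Set E :=
  {y ∈ S | ∀ f g : E → 𝕜, ConvexOn 𝕜 univ f → ConcaveOn 𝕜 univ g →
    (∀ z ∈ S, f z ≤ g z) → f x = g x → f y = g y}

theorem mem_extremePoints_of_tightFace_subset {S : Set E} {x : E} (hx : x ∈ S)
    (h : tightFace 𝕜 S x ⊆ {x}) : x ∈ S.extremePoints 𝕜 := by
  refine ⟨hx, fun x₁ hx₁ x₂ hx₂ ⟨a, b, ha, hb, hab, hx'⟩ => h ⟨hx₁, fun f g hf hg hS hfg => ?_⟩⟩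
  have hf' : f x ≤ a * f x₁ + b * f x₂ := by
    simpa only [hx', smul_eq_mul] using hf.2 (mem_univ x₁) (mem_univ x₂) ha.le hb.le hab
  have hg' : a * g x₁ + b * g x₂ ≤ g x := by
    simpa only [hx', smul_eq_mul] using hg.2 (mem_univ x₁) (mem_univ x₂) ha.le hb.le hab
  nlinarith [mul_le_mul_of_nonneg_left (hS x₁ hx₁) ha.le,
    mul_le_mul_of_nonneg_left (hS x₂ hx₂) hb.le]

end TightFace

section Coordinates

variable {n : ℕ} {lam : ℕ → ℝ}

theorem tY_one (w : TPt n) {j : ℕ} (h1 : 1 ≤ j) (h2 : j ≤ n) : tY n lam w 1 j = lam j := by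
  rw [tY, if_pos ⟨rfl, h1, h2⟩]

theorem tY_eq_coord (w : TPt n) {i j : ℕ} (h : 2 ≤ i ∧ i ≤ j ∧ j ≤ n) :
    tY n lam w i j = w.1 ⟨(i, j), h⟩ := by
  rw [tY, if_neg (by omega), dif_pos h]

theorem tZ_eq_coord (w : TPt n) {i j : ℕ} (h : 1 ≤ i ∧ i ≤ j ∧ j ≤ n - 2) :
    tZ n w i j = w.2.1 ⟨(i, j), h⟩ := dif_pos h

theorem tU_eq_coord (w : TPt n) {i : ℕ} (h : 1 ≤ i ∧ i ≤ n - 2) :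
    tU n w i = w.2.2.1 ⟨i, h⟩ := dif_pos h

theorem tD_eq_coord (w : TPt n) {i : ℕ} (h : 1 ≤ i ∧ i ≤ n - 2) :
    tD n w i = w.2.2.2.1 ⟨i, h⟩ := dif_pos h

theorem TPt.ext_coord {w w' : TPt n}
    (hY : ∀ i j, 2 ≤ i → i ≤ j → j ≤ n → tY n lam w i j = tY n lam w' i j)
    (hZ : ∀ i j, 1 ≤ i → i ≤ j → j ≤ n - 2 → tZ n w i j = tZ n w' i j)
    (hU : ∀ i, 1 ≤ i → i ≤ n - 2 → tU n w i = tU n w' i)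
    (hD : ∀ i, 1 ≤ i → i ≤ n - 2 → tD n w i = tD n w' i)
    (hL : tL n w = tL n w') : w = w' := by
  refine Prod.ext ?_ (Prod.ext ?_ (Prod.ext ?_ (Prod.ext ?_ hL)))
  · funext ⟨⟨i, j⟩, h⟩
    simpa only [tY_eq_coord _ h] using hY i j h.1 h.2.1 h.2.2
  · funext ⟨⟨i, j⟩, h⟩
    simpa only [tZ_eq_coord _ h] using hZ i j h.1 h.2.1 h.2.2
  · funext ⟨i, h⟩
    simpa only [tU_eq_coord _ h] using hU i h.1 h.2
  · funext ⟨i, h⟩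
    simpa only [tD_eq_coord _ h] using hD i h.1 h.2

theorem tY_combo (w₁ w₂ : TPt n) (a b : ℝ) (hab : a + b = 1) (i j : ℕ) :
    tY n lam (a • w₁ + b • w₂) i j = a * tY n lam w₁ i j + b * tY n lam w₂ i j := by
  unfold tY
  split_ifs
  · rw [← add_mul, hab, one_mul]
  · rfl
  · ring

theorem tZ_combo (w₁ w₂ : TPt n) (a b : ℝ) (i j : ℕ) :
    tZ n (a • w₁ + b • w₂) i j = a * tZ n w₁ i j + b * tZ n w₂ i j := by
  unfold tZ
  split_ifs
  · rfl
  · ring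

theorem tU_combo (w₁ w₂ : TPt n) (a b : ℝ) (i : ℕ) :
    tU n (a • w₁ + b • w₂) i = a * tU n w₁ i + b * tU n w₂ i := by
  unfold tU
  split_ifs
  · rfl
  · ring

theorem tD_combo (w₁ w₂ : TPt n) (a b : ℝ) (i : ℕ) :
    tD n (a • w₁ + b • w₂) i = a * tD n w₁ i + b * tD n w₂ i := by
  unfold tD
  split_ifs
  · rfl
  · ring

theorem convexOn_tY (i j : ℕ) : ConvexOn ℝ univ fun w : TPt n => tY n lam w i j :=
  convexOn_univ_of_map_combo fun w₁ w₂ a b hab => tY_combo w₁ w₂ a b hab i j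

theorem concaveOn_tY (i j : ℕ) : ConcaveOn ℝ univ fun w : TPt n => tY n lam w i j :=
  concaveOn_univ_of_map_combo fun w₁ w₂ a b hab => tY_combo w₁ w₂ a b hab i j

theorem concaveOn_tZ (i j : ℕ) : ConcaveOn ℝ univ fun w : TPt n => tZ n w i j :=
  concaveOn_univ_of_map_combo fun w₁ w₂ a b _ => tZ_combo w₁ w₂ a b i j

theorem convexOn_tU (i : ℕ) : ConvexOn ℝ univ fun w : TPt n => tU n w i :=
  convexOn_univ_of_map_combo fun w₁ w₂ a b _ => tU_combo w₁ w₂ a b i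

theorem concaveOn_tU (i : ℕ) : ConcaveOn ℝ univ fun w : TPt n => tU n w i :=
  concaveOn_univ_of_map_combo fun w₁ w₂ a b _ => tU_combo w₁ w₂ a b i

theorem convexOn_tD (i : ℕ) : ConvexOn ℝ univ fun w : TPt n => tD n w i :=
  convexOn_univ_of_map_combo fun w₁ w₂ a b _ => tD_combo w₁ w₂ a b i

theorem concaveOn_tD (i : ℕ) : ConcaveOn ℝ univ fun w : TPt n => tD n w i :=
  concaveOn_univ_of_map_combo fun w₁ w₂ a b _ => tD_combo w₁ w₂ a b i

theorem convexOn_tL : ConvexOn ℝ univ (tL n) :=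
  convexOn_univ_of_map_combo fun _ _ _ _ _ => rfl

theorem concaveOn_tL : ConcaveOn ℝ univ (tL n) :=
  concaveOn_univ_of_map_combo fun _ _ _ _ _ => rfl

end Coordinates

noncomputable def tGTVertex (m : ℕ) (lam : ℕ → ℝ) : TPt (m + 2) :=
  (fun p => if p.1.2 = m + 2 ∨ p.1.1 = m + 1 then 0 else lam p.1.2,
   fun p => lam (p.1.2 + 1),
   fun p => if p.1 = 1 then min (lam (m + 1)) (lam (m + 1) + lam (m + 2))
     else if p.1 = m then lam (m + 1) else 0,
   fun p => if p.1 = 1 then min (lam (m + 1)) (lam (m + 1) + lam (m + 2)) else 0,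
   0)

section Vertex

variable {m : ℕ} {lam : ℕ → ℝ}

theorem tY_tGTVertex {i j : ℕ} (hi : 1 ≤ i) (hij : i ≤ j) (hj : j ≤ m + 1) (him : i ≠ m + 1) :
    tY (m + 2) lam (tGTVertex m lam) i j = lam j := by
  obtain rfl | hi := eq_or_lt_of_le hi
  · exact tY_one _ (by omega) (by omega)
  · rw [tY_eq_coord _ ⟨hi, hij, by omega⟩]
    show (if j = m + 2 ∨ i = m + 1 then 0 else lam j) = lam j
    rw [if_neg (by omega)]

theorem tY_tGTVertex_eq_zero {i j : ℕ} (hi : 2 ≤ i) (hij : i ≤ j) (hj : j ≤ m + 2)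
    (h : j = m + 2 ∨ i = m + 1) : tY (m + 2) lam (tGTVertex m lam) i j = 0 := by
  rw [tY_eq_coord _ ⟨hi, hij, hj⟩]
  show (if j = m + 2 ∨ i = m + 1 then 0 else lam j) = 0
  rw [if_pos h]

theorem tZ_tGTVertex {i j : ℕ} (hi : 1 ≤ i) (hij : i ≤ j) (hj : j ≤ m) :
    tZ (m + 2) (tGTVertex m lam) i j = lam (j + 1) :=
  tZ_eq_coord _ ⟨hi, hij, hj⟩

theorem tU_tGTVertex_one (hm : 1 ≤ m) :
    tU (m + 2) (tGTVertex m lam) 1 = min (lam (m + 1)) (lam (m + 1) + lam (m + 2)) := by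
  rw [tU_eq_coord _ ⟨le_rfl, hm⟩]
  simp [tGTVertex]

theorem tU_tGTVertex_self (hm : 2 ≤ m) : tU (m + 2) (tGTVertex m lam) m = lam (m + 1) := by
  rw [tU_eq_coord _ (show 1 ≤ m ∧ m ≤ m + 2 - 2 by omega)]
  simp [tGTVertex, show m ≠ 1 by omega]

theorem tU_tGTVertex_eq_zero {i : ℕ} (hi : 2 ≤ i) (him : i + 1 ≤ m) :
    tU (m + 2) (tGTVertex m lam) i = 0 := by
  rw [tU_eq_coord _ (show 1 ≤ i ∧ i ≤ m + 2 - 2 by omega)]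
  simp [tGTVertex, show i ≠ 1 by omega, show i ≠ m by omega]

theorem tD_tGTVertex_one (hm : 1 ≤ m) :
    tD (m + 2) (tGTVertex m lam) 1 = min (lam (m + 1)) (lam (m + 1) + lam (m + 2)) := by
  rw [tD_eq_coord _ ⟨le_rfl, hm⟩]
  simp [tGTVertex]

theorem tD_tGTVertex_eq_zero {i : ℕ} (hi : 2 ≤ i) (him : i ≤ m) :
    tD (m + 2) (tGTVertex m lam) i = 0 := by
  rw [tD_eq_coord _ (show 1 ≤ i ∧ i ≤ m + 2 - 2 by omega)]
  simp [tGTVertex, show i ≠ 1 by omega]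

theorem tL_tGTVertex : tL (m + 2) (tGTVertex m lam) = 0 := rfl

theorem tGTVertex_mem_Vlam (hm : 2 ≤ m) : tGTVertex m lam ∈ Vlam (m + 2) lam := by
  intro i hi him
  change i ≤ m at him
  change _ = tY _ _ _ i (m + 1) - tY _ _ _ (i + 1) (m + 1)
  rcases (by omega : i = 1 ∨ 2 ≤ i ∧ i + 1 ≤ m ∨ i = m) with rfl | ⟨hi2, him'⟩ | rfl
  · rw [tU_tGTVertex_one (by omega), tD_tGTVertex_one (by omega),
      tY_tGTVertex le_rfl (by omega) le_rfl (by omega),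
      tY_tGTVertex (by omega) (by omega) le_rfl (by omega)]
    ring
  · rw [tU_tGTVertex_eq_zero hi2 him', tD_tGTVertex_eq_zero hi2 him,
      tY_tGTVertex hi (by omega) le_rfl (by omega),
      tY_tGTVertex (by omega) (by omega) le_rfl (by omega)]
    ring
  · rw [tU_tGTVertex_self hm, tD_tGTVertex_eq_zero hm le_rfl,
      tY_tGTVertex hi (by omega) le_rfl (by omega),
      tY_tGTVertex_eq_zero (by omega) le_rfl (by omega) (Or.inr rfl), sub_zero]

theorem tGTVertex_upDown_bounds (hm : 2 ≤ m) (habs : |lam (m + 2)| ≤ lam (m + 1)) {i : ℕ}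
    (hi : 1 ≤ i) (him : i ≤ m) :
    let X := tGTVertex m lam
    tY (m + 2) lam X i (m + 1) ≥ tU (m + 2) X i ∧
      tU (m + 2) X i ≥ max (tY (m + 2) lam X i (m + 2)) (tY (m + 2) lam X (i + 1) (m + 2)) ∧
      tU (m + 2) X i ≤ tY (m + 2) lam X i (m + 1) + tY (m + 2) lam X i (m + 2)
        + tY (m + 2) lam X (i + 1) (m + 2) ∧
      tY (m + 2) lam X (i + 1) (m + 1) ≥ tD (m + 2) X i ∧
      tD (m + 2) X i ≥ max (tY (m + 2) lam X i (m + 2)) (tY (m + 2) lam X (i + 1) (m + 2)) ∧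
      tD (m + 2) X i ≤ tY (m + 2) lam X (i + 1) (m + 1) + tY (m + 2) lam X i (m + 2)
        + tY (m + 2) lam X (i + 1) (m + 2) := by
  intro X
  have hpos : 0 ≤ lam (m + 1) := (abs_nonneg _).trans habs
  rcases (by omega : i = 1 ∨ 2 ≤ i ∧ i + 1 ≤ m ∨ i = m) with rfl | ⟨hi2, him'⟩ | rfl
  · rw [tU_tGTVertex_one (by omega), tD_tGTVertex_one (by omega),
      tY_one _ (by omega) (by omega), tY_one _ (by omega) le_rfl,
      tY_tGTVertex (i := 2) (by omega) (by omega) le_rfl (by omega),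
      tY_tGTVertex_eq_zero le_rfl (by omega) le_rfl (Or.inl rfl)]
    have hM : max (lam (m + 2)) 0 ≤ min (lam (m + 1)) (lam (m + 1) + lam (m + 2)) := by
      have := neg_abs_le (lam (m + 2))
      have := le_abs_self (lam (m + 2))
      exact max_le (le_min (by linarith) (by linarith)) (le_min hpos (by linarith))
    have := min_le_right (lam (m + 1)) (lam (m + 1) + lam (m + 2))
    exact ⟨min_le_left _ _, hM, by linarith, min_le_left _ _, hM, by linarith⟩
  · rw [tU_tGTVertex_eq_zero hi2 him', tD_tGTVertex_eq_zero hi2 him,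
      tY_tGTVertex hi (by omega) le_rfl (by omega),
      tY_tGTVertex (by omega) (by omega) le_rfl (by omega),
      tY_tGTVertex_eq_zero hi2 (by omega) le_rfl (Or.inl rfl),
      tY_tGTVertex_eq_zero (by omega) (by omega) le_rfl (Or.inl rfl), max_self]
    exact ⟨hpos, le_rfl, by linarith, hpos, le_rfl, by linarith⟩
  · rw [tU_tGTVertex_self hm, tD_tGTVertex_eq_zero hm le_rfl,
      tY_tGTVertex hi (by omega) le_rfl (by omega),
      tY_tGTVertex_eq_zero (by omega) le_rfl (by omega) (Or.inr rfl),
      tY_tGTVertex_eq_zero hm (by omega) le_rfl (Or.inl rfl),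
      tY_tGTVertex_eq_zero (by omega) (by omega) le_rfl (Or.inl rfl), max_self]
    exact ⟨le_rfl, hpos, by linarith, le_rfl, le_rfl, by linarith⟩

theorem tGTVertex_mem (hm : 2 ≤ m)
    (hmono : ∀ j, 1 ≤ j → j + 1 ≤ m + 1 → lam (j + 1) ≤ lam j)
    (habs : |lam (m + 2)| ≤ lam (m + 1)) : tGTVertex m lam ∈ tGT (m + 2) lam := by
  refine ⟨tGTVertex_mem_Vlam hm, ?_, ?_, ?_, fun i hi him => tGTVertex_upDown_bounds hm habs hi him, ?_⟩ <;>
    simp only [show m + 2 - 2 = m from rfl, show m + 2 - 1 = m + 1 from rfl]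
  · intro i j hi _ hij hj
    rw [tY_tGTVertex hi hij (by omega) (by omega), tZ_tGTVertex hi hij hj,
      tY_tGTVertex hi (by omega) (by omega) (by omega)]
    exact ⟨hmono j (by omega) (by omega), le_rfl⟩
  · intro i j hi _ hij hj
    rw [tZ_tGTVertex hi (by omega) (by omega), Nat.sub_add_cancel (by omega : 1 ≤ j),
      tY_tGTVertex (by omega) hij (by omega) (by omega), tZ_tGTVertex hi (by omega) hj]
    exact ⟨le_rfl, hmono j (by omega) (by omega)⟩
  · intro i hi him
    rw [tZ_tGTVertex hi him le_rfl]
    rcases (by omega : i + 1 ≤ m ∨ i = m) with him' | rfl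
    · rw [tY_tGTVertex (by omega) (by omega) le_rfl (by omega)]
    · rw [tY_tGTVertex_eq_zero (by omega) le_rfl (by omega) (Or.inr rfl)]
      exact (abs_nonneg _).trans habs
  · rw [tY_tGTVertex_eq_zero (by omega) le_rfl (by omega) (Or.inr rfl),
      tY_tGTVertex_eq_zero (by omega) (by omega) le_rfl (Or.inl rfl),
      tY_tGTVertex_eq_zero (by omega) le_rfl le_rfl (Or.inl rfl), tL_tGTVertex, max_self]
    norm_num

end Vertex

section Face

variable {m : ℕ} {lam : ℕ → ℝ} {y : TPt (m + 2)}

theorem tZ_eq_tY_of_mem_tightFace (hy : y ∈ tightFace ℝ (tGT (m + 2) lam) (tGTVertex m lam))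
    {i j : ℕ} (hi : 1 ≤ i) (hij : i ≤ j) (hj : j ≤ m) :
    tZ (m + 2) y i j = tY (m + 2) lam y i (j + 1) := by
  refine (hy.2 _ _ (convexOn_tY i (j + 1)) (concaveOn_tZ i j)
    (fun z hz => (hz.2.1 i j hi (by omega) hij hj).2) ?_).symm
  rw [tY_tGTVertex hi (by omega) (by omega) (by omega), tZ_tGTVertex hi hij hj]

theorem tY_succ_eq_tZ_of_mem_tightFace
    (hy : y ∈ tightFace ℝ (tGT (m + 2) lam) (tGTVertex m lam))
    {i j : ℕ} (hi : 1 ≤ i) (hij : i + 1 ≤ j) (hj : j ≤ m + 1) (him : i + 1 ≤ m) :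
    tY (m + 2) lam y (i + 1) j = tZ (m + 2) y i (j - 1) := by
  refine hy.2 _ _ (convexOn_tY (i + 1) j) (concaveOn_tZ i (j - 1)) (fun z hz => ?_) ?_
  · rcases (by omega : j ≤ m ∨ j = m + 1) with hj | rfl
    · exact (hz.2.2.1 i j hi (by omega) hij hj).1
    · exact hz.2.2.2.1 i hi (by omega)
  · rw [tY_tGTVertex (by omega) hij hj (by omega), tZ_tGTVertex hi (by omega) (by omega),
      Nat.sub_add_cancel (by omega : 1 ≤ j)]

theorem tY_of_mem_tightFace (hy : y ∈ tightFace ℝ (tGT (m + 2) lam) (tGTVertex m lam))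
    {i j : ℕ} (hi : 1 ≤ i) (him : i ≤ m) (hij : i ≤ j) (hj : j ≤ m + 1) :
    tY (m + 2) lam y i j = lam j := by
  induction i, hi using Nat.le_induction generalizing j with
  | base => exact tY_one _ (by omega) (by omega)
  | succ i hi ih =>
    rw [tY_succ_eq_tZ_of_mem_tightFace hy hi hij hj him,
      tZ_eq_tY_of_mem_tightFace hy hi (by omega) (by omega), Nat.sub_add_cancel (by omega),
      ih (by omega) (by omega) hj]

theorem tY_last_eq_tU_of_mem_tightFace
    (hy : y ∈ tightFace ℝ (tGT (m + 2) lam) (tGTVertex m lam))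
    {i : ℕ} (hi : 2 ≤ i) (him : i + 1 ≤ m) :
    tY (m + 2) lam y i (m + 2) = tU (m + 2) y i ∧
      tY (m + 2) lam y (i + 1) (m + 2) = tU (m + 2) y i := by
  have hX := tU_tGTVertex_eq_zero (lam := lam) hi him
  constructor
  · refine hy.2 _ _ (convexOn_tY i (m + 2)) (concaveOn_tU i)
      (fun z hz => (le_max_left _ _).trans (hz.2.2.2.2.1 i (by omega) (by omega)).2.1) ?_
    rw [hX, tY_tGTVertex_eq_zero hi (by omega) le_rfl (Or.inl rfl)]
  · refine hy.2 _ _ (convexOn_tY (i + 1) (m + 2)) (concaveOn_tU i)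
      (fun z hz => (le_max_right _ _).trans (hz.2.2.2.2.1 i (by omega) (by omega)).2.1) ?_
    rw [hX, tY_tGTVertex_eq_zero (by omega) (by omega) le_rfl (Or.inl rfl)]

theorem corner_eq_zero_of_mem_tightFace (hm : 2 ≤ m)
    (hy : y ∈ tightFace ℝ (tGT (m + 2) lam) (tGTVertex m lam)) :
    tD (m + 2) y m = 0 ∧ tY (m + 2) lam y m (m + 2) = 0 ∧
      tY (m + 2) lam y (m + 1) (m + 1) = 0 ∧ tY (m + 2) lam y (m + 1) (m + 2) = 0 := by
  have hS := fun z (hz : z ∈ tGT (m + 2) lam) => hz.2.2.2.2.1 m (by omega) le_rfl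
  have hD := tD_tGTVertex_eq_zero (lam := lam) hm le_rfl
  have hY₁ : tY (m + 2) lam (tGTVertex m lam) m (m + 2) = 0 :=
    tY_tGTVertex_eq_zero hm (by omega) le_rfl (Or.inl rfl)
  have hY₂ : tY (m + 2) lam (tGTVertex m lam) (m + 1) (m + 1) = 0 :=
    tY_tGTVertex_eq_zero (by omega) le_rfl (by omega) (Or.inr rfl)
  have hY₃ : tY (m + 2) lam (tGTVertex m lam) (m + 1) (m + 2) = 0 :=
    tY_tGTVertex_eq_zero (by omega) (by omega) le_rfl (Or.inl rfl)
  have e₁ : tY (m + 2) lam y m (m + 2) = tD (m + 2) y m :=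
    hy.2 _ _ (convexOn_tY m (m + 2)) (concaveOn_tD m)
      (fun z hz => (le_max_left _ _).trans (hS z hz).2.2.2.2.1) (by rw [hD, hY₁])
  have e₂ : tY (m + 2) lam y (m + 1) (m + 2) = tD (m + 2) y m :=
    hy.2 _ _ (convexOn_tY (m + 1) (m + 2)) (concaveOn_tD m)
      (fun z hz => (le_max_right _ _).trans (hS z hz).2.2.2.2.1) (by rw [hD, hY₃])
  have e₃ : tD (m + 2) y m = tY (m + 2) lam y (m + 1) (m + 1) :=
    hy.2 _ _ (convexOn_tD m) (concaveOn_tY (m + 1) (m + 1))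
      (fun z hz => (hS z hz).2.2.2.1) (by rw [hD, hY₂])
  have e₄ : tD (m + 2) y m = tY (m + 2) lam y (m + 1) (m + 1) + tY (m + 2) lam y m (m + 2)
      + tY (m + 2) lam y (m + 1) (m + 2) :=
    hy.2 _ _ (convexOn_tD m)
      (((concaveOn_tY (m + 1) (m + 1)).add (concaveOn_tY m (m + 2))).add
        (concaveOn_tY (m + 1) (m + 2)))
      (fun z hz => (hS z hz).2.2.2.2.2) (by simp only [Pi.add_apply, hD, hY₁, hY₂, hY₃, add_zero])
  refine ⟨?_, ?_, ?_, ?_⟩ <;> linarith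

theorem tY_last_eq_zero_of_mem_tightFace (hm : 2 ≤ m)
    (hy : y ∈ tightFace ℝ (tGT (m + 2) lam) (tGTVertex m lam))
    {i : ℕ} (hi : 2 ≤ i) (him : i ≤ m) : tY (m + 2) lam y i (m + 2) = 0 := by
  induction him using Nat.decreasingInduction with
  | self => exact (corner_eq_zero_of_mem_tightFace hm hy).2.1
  | of_succ i him ih =>
    obtain ⟨h₁, h₂⟩ := tY_last_eq_tU_of_mem_tightFace hy hi him
    rw [h₁, ← h₂, ih (by omega)]

theorem tL_eq_zero_of_mem_tightFace (hm : 2 ≤ m)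
    (hy : y ∈ tightFace ℝ (tGT (m + 2) lam) (tGTVertex m lam)) :
    tL (m + 2) y = 0 ∧ tY (m + 2) lam y (m + 2) (m + 2) = 0 := by
  have hS := fun z (hz : z ∈ tGT (m + 2) lam) => hz.2.2.2.2.2
  have hY₂ : tY (m + 2) lam (tGTVertex m lam) (m + 1) (m + 1) = 0 :=
    tY_tGTVertex_eq_zero (by omega) le_rfl (by omega) (Or.inr rfl)
  have hY₄ : tY (m + 2) lam (tGTVertex m lam) (m + 2) (m + 2) = 0 :=
    tY_tGTVertex_eq_zero (by omega) le_rfl le_rfl (Or.inl rfl)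
  have e₁ : tL (m + 2) y = tY (m + 2) lam y (m + 1) (m + 1) :=
    hy.2 _ _ convexOn_tL (concaveOn_tY (m + 1) (m + 1)) (fun z hz => (hS z hz).1)
      (by rw [hY₂, tL_tGTVertex])
  have e₂ : tY (m + 2) lam y (m + 2) (m + 2) = tL (m + 2) y :=
    hy.2 _ _ (convexOn_tY (m + 2) (m + 2)) concaveOn_tL
      (fun z hz => (le_max_right _ _).trans (hS z hz).2.1) (by rw [hY₄, tL_tGTVertex])
  have h₀ := (corner_eq_zero_of_mem_tightFace hm hy).2.2.1
  exact ⟨e₁.trans h₀, e₂.trans (e₁.trans h₀)⟩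

theorem tU_self_of_mem_tightFace (hm : 2 ≤ m)
    (hy : y ∈ tightFace ℝ (tGT (m + 2) lam) (tGTVertex m lam)) :
    tU (m + 2) y m = lam (m + 1) := by
  have e : tU (m + 2) y m = tY (m + 2) lam y m (m + 1) :=
    hy.2 _ _ (convexOn_tU m) (concaveOn_tY m (m + 1))
      (fun z hz => (hz.2.2.2.2.1 m (by omega) le_rfl).1)
      (by rw [tU_tGTVertex_self hm, tY_tGTVertex (by omega) (by omega) le_rfl (by omega)])
  rw [e, tY_of_mem_tightFace hy (by omega) le_rfl (by omega) le_rfl]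

theorem tU_one_of_mem_tightFace (hm : 2 ≤ m)
    (hy : y ∈ tightFace ℝ (tGT (m + 2) lam) (tGTVertex m lam)) :
    tU (m + 2) y 1 = min (lam (m + 1)) (lam (m + 1) + lam (m + 2)) := by
  have hmin : ∀ w : TPt (m + 2), tY (m + 2) lam w 2 (m + 2) = 0 →
      min (tY (m + 2) lam w 1 (m + 1)) (tY (m + 2) lam w 1 (m + 1) + tY (m + 2) lam w 1 (m + 2)
        + tY (m + 2) lam w 2 (m + 2)) = min (lam (m + 1)) (lam (m + 1) + lam (m + 2)) := by
    intro w hw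
    rw [hw, tY_one w (by omega) (by omega), tY_one w (by omega) le_rfl, add_zero]
  have e : tU (m + 2) y 1 = min (tY (m + 2) lam y 1 (m + 1)) (tY (m + 2) lam y 1 (m + 1)
      + tY (m + 2) lam y 1 (m + 2) + tY (m + 2) lam y 2 (m + 2)) :=
    hy.2 _ _ (convexOn_tU 1) ((concaveOn_tY 1 (m + 1)).inf
      (((concaveOn_tY 1 (m + 1)).add (concaveOn_tY 1 (m + 2))).add (concaveOn_tY 2 (m + 2))))
      (fun z hz => le_min (hz.2.2.2.2.1 1 le_rfl (by omega)).1
        (hz.2.2.2.2.1 1 le_rfl (by omega)).2.2.1)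
      (by rw [tU_tGTVertex_one (by omega)]; exact (hmin _
        (tY_tGTVertex_eq_zero le_rfl (by omega) le_rfl (Or.inl rfl))).symm)
  rw [e, hmin y (tY_last_eq_zero_of_mem_tightFace hm hy le_rfl hm)]

theorem tD_eq_of_mem_Vlam {w : TPt (m + 2)} (hw : w ∈ Vlam (m + 2) lam) {i : ℕ} (hi : 1 ≤ i)
    (him : i ≤ m) : tD (m + 2) w i =
      tU (m + 2) w i - (tY (m + 2) lam w i (m + 1) - tY (m + 2) lam w (i + 1) (m + 1)) := by
  have h : tU (m + 2) w i - tD (m + 2) w i =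
      tY (m + 2) lam w i (m + 1) - tY (m + 2) lam w (i + 1) (m + 1) := hw i hi him
  linarith

theorem eq_tGTVertex_of_mem_tightFace (hm : 2 ≤ m)
    (hy : y ∈ tightFace ℝ (tGT (m + 2) lam) (tGTVertex m lam)) : y = tGTVertex m lam := by
  obtain ⟨-, -, hY₁₁, hY₁₂⟩ := corner_eq_zero_of_mem_tightFace hm hy
  obtain ⟨hL, hY₂₂⟩ := tL_eq_zero_of_mem_tightFace hm hy
  have hY : ∀ i j, 1 ≤ i → i ≤ j → j ≤ m + 2 →
      tY (m + 2) lam y i j = tY (m + 2) lam (tGTVertex m lam) i j := by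
    intro i j hi hij hj
    obtain rfl | hi := eq_or_lt_of_le hi
    · rw [tY_one _ (by omega) hj, tY_one _ (by omega) hj]
    by_cases h : j = m + 2 ∨ i = m + 1
    · rw [tY_tGTVertex_eq_zero hi hij hj h]
      rcases (by omega : i ≤ m ∨ i = m + 1 ∨ i = m + 2) with him | rfl | rfl
      · rw [show j = m + 2 by omega]
        exact tY_last_eq_zero_of_mem_tightFace hm hy hi him
      · rcases (by omega : j = m + 1 ∨ j = m + 2) with rfl | rfl
        exacts [hY₁₁, hY₁₂]
      · rwa [show j = m + 2 by omega]
    · rw [tY_tGTVertex (by omega) hij (by omega) (by omega),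
        tY_of_mem_tightFace hy (by omega) (by omega) hij (by omega)]
  have hU : ∀ i, 1 ≤ i → i ≤ m → tU (m + 2) y i = tU (m + 2) (tGTVertex m lam) i := by
    intro i hi him
    rcases (by omega : i = 1 ∨ 2 ≤ i ∧ i + 1 ≤ m ∨ i = m) with rfl | ⟨hi, him⟩ | rfl
    · rw [tU_one_of_mem_tightFace hm hy, tU_tGTVertex_one (by omega)]
    · rw [← (tY_last_eq_tU_of_mem_tightFace hy hi him).1,
        tY_last_eq_zero_of_mem_tightFace hm hy hi (by omega), tU_tGTVertex_eq_zero hi him]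
    · rw [tU_self_of_mem_tightFace hm hy, tU_tGTVertex_self hm]
  refine TPt.ext_coord (lam := lam) (fun i j hi => hY i j (by omega)) ?_ hU ?_
    (hL.trans tL_tGTVertex.symm)
  · intro i j hi hij (hj : j ≤ m)
    rw [tZ_eq_tY_of_mem_tightFace hy hi hij hj, tZ_tGTVertex hi hij hj,
      tY_of_mem_tightFace hy hi (by omega) (by omega) (by omega)]
  · intro i hi (him : i ≤ m)
    rw [tD_eq_of_mem_Vlam hy.1.1 hi him, tD_eq_of_mem_Vlam (tGTVertex_mem_Vlam hm) hi him,
      hU i hi him, hY i (m + 1) hi (by omega) (by omega), hY (i + 1) (m + 1) (by omega)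
        (by omega) (by omega)]

theorem tGTVertex_mem_extremePoints (hm : 2 ≤ m)
    (hmono : ∀ j, 1 ≤ j → j + 1 ≤ m + 1 → lam (j + 1) ≤ lam j)
    (habs : |lam (m + 2)| ≤ lam (m + 1)) :
    tGTVertex m lam ∈ (tGT (m + 2) lam).extremePoints ℝ :=
  mem_extremePoints_of_tightFace_subset (tGTVertex_mem hm hmono habs)
    fun _ hy => eq_tGTVertex_of_mem_tightFace hm hy

end Face

theorem statement11_general (n : ℕ) (hn : 4 ≤ n) (lam : ℕ → ℝ)
    (hmono : ∀ j, 1 ≤ j → j + 1 ≤ n - 1 → lam (j + 1) ≤ lam j)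
    (habs : |lam n| ≤ lam (n - 1)) :
    ∃ x ∈ (tGT n lam).extremePoints ℝ,
      (∃ p, x.1 p = 0) ∨ (∃ p, x.2.1 p = 0) ∨ (∃ p, x.2.2.1 p = 0) ∨
      (∃ p, x.2.2.2.1 p = 0) ∨ x.2.2.2.2 = 0 := by
  obtain ⟨m, rfl⟩ : ∃ m, n = m + 2 := ⟨n - 2, by omega⟩
  exact ⟨tGTVertex m lam, tGTVertex_mem_extremePoints (by omega) hmono habs,
    Or.inr (Or.inr (Or.inr (Or.inr tL_tGTVertex)))⟩

/-- For `n ≥ 4` and a half-integral weight `λ_1 ≥ … ≥ λ_{n−1} ≥ |λ_n|`, the tweaked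
Gelfand–Tsetlin polytope has a vertex one of whose coordinates equals `0` (hence not all
of its coordinates lie in `½ + ℤ`). -/
theorem statement11 (n : ℕ) (hn : 4 ≤ n) (lam : ℕ → ℝ)
    (hmono : ∀ j, 1 ≤ j → j + 1 ≤ n - 1 → lam (j + 1) ≤ lam j)
    (habs : |lam n| ≤ lam (n - 1))
    (hhalf : ∀ j, 1 ≤ j → j ≤ n → ∃ k : ℤ, lam j = k + 1 / 2) :
    ∃ x ∈ (tGT n lam).extremePoints ℝ,
      (∃ p, x.1 p = 0) ∨ (∃ p, x.2.1 p = 0) ∨ (∃ p, x.2.2.1 p = 0) ∨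
      (∃ p, x.2.2.2.1 p = 0) ∨ x.2.2.2.2 = 0 :=
  statement11_general n hn lam hmono habs
end
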